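/- arXiv:1104.3258 — 11 statements merged into one kernel-verified Lean document; each statement's English description precedes it below -/
import Mathlib

section
/- Let Ψ be a finite set, let p : Ψ → ℝ be the prior probability mass function with p(ψ) > 0 for all ψ and ∑_ψ p(ψ) = 1, and let q : Ψ → ℝ be the posterior probability mass function with q(ψ) ≥ 0 and ∑_ψ q(ψ) = 1. For the loss function L(ψ, a) = 1{ψ ≠ a}/p(ψ), the posterior risk of an action a ∈ Ψ equals r(a) = ∑_ψ q(ψ)/p(ψ) − q(a)/p(a), and any maximizer a* of the relative belief ratio q(ψ)/p(ψ) over Ψ satisfies r(a*) ≤ r(a) for every a ∈ Ψ; that is, the least relative surprise estimate is a Bayes rule. -/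
open scoped Classical

theorem Finset.sum_ite_ne_eq_sum_sub {ι M : Type*} [Fintype ι] [DecidableEq ι]
    [AddCommGroup M] (f : ι → M) (a : ι) :
    ∑ i, (if i ≠ a then f i else 0) = ∑ i, f i - f a := by
  rw [← Finset.sum_filter, Finset.filter_ne', Finset.sum_erase_eq_sub (Finset.mem_univ a)]

theorem sum_ite_ne_one_div_mul_eq {Ψ : Type*} [Fintype Ψ] [DecidableEq Ψ]
    (p q : Ψ → ℝ) (a : Ψ) :
    ∑ ψ, (if ψ ≠ a then 1 / p ψ else 0) * q ψ = ∑ ψ, q ψ / p ψ - q a / p a := by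
  simp_rw [ite_mul, zero_mul, one_div_mul_eq_div]
  exact Finset.sum_ite_ne_eq_sum_sub (fun ψ => q ψ / p ψ) a

theorem stmt_0_general {Ψ : Type*} [Fintype Ψ] (p q : Ψ → ℝ)
    (r : Ψ → ℝ)
    (hr : ∀ a, r a = ∑ ψ, (if ψ ≠ a then 1 / p ψ else 0) * q ψ)
    (astar : Ψ) (hstar : ∀ ψ, q ψ / p ψ ≤ q astar / p astar) :
    (∀ a, r a = (∑ ψ, q ψ / p ψ) - q a / p a) ∧ (∀ a, r astar ≤ r a) := by
  have hrisk : ∀ a, r a = (∑ ψ, q ψ / p ψ) - q a / p a := fun a =>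
    (hr a).trans (sum_ite_ne_one_div_mul_eq p q a)
  refine ⟨hrisk, fun a => ?_⟩
  rw [hrisk a, hrisk astar]
  exact sub_le_sub_left (hstar a) _

/-- For a finite set `Ψ`, a strictly positive prior pmf `p` and a
posterior pmf `q`, under the loss `L(ψ, a) = 1{ψ ≠ a}/p(ψ)` the posterior risk of an
action `a` equals `∑ ψ, q ψ / p ψ - q a / p a`, and any maximizer of the relative
belief ratio `q ψ / p ψ` minimizes the posterior risk (the LRSE is a Bayes rule). -/
theorem stmt_0 {Ψ : Type*} [Fintype Ψ] (p q : Ψ → ℝ)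
    (hp : ∀ ψ, 0 < p ψ) (hp1 : ∑ ψ, p ψ = 1)
    (hq : ∀ ψ, 0 ≤ q ψ) (hq1 : ∑ ψ, q ψ = 1)
    (r : Ψ → ℝ)
    (hr : ∀ a, r a = ∑ ψ, (if ψ ≠ a then 1 / p ψ else 0) * q ψ)
    (astar : Ψ) (hstar : ∀ ψ, q ψ / p ψ ≤ q astar / p astar) :
    (∀ a, r a = (∑ ψ, q ψ / p ψ) - q a / p a) ∧ (∀ a, r astar ≤ r a) :=
  stmt_0_general p q r hr astar hstar
end

section
/- Let Ψ be a countable set, p : Ψ → ℝ the prior probability mass function with p(ψ) > 0 for all ψ and ∑_ψ p(ψ) = 1, and q : Ψ → ℝ the posterior probability mass function with q(ψ) ≥ 0 and ∑_ψ q(ψ) = 1. For η > 0 define the loss L_η(ψ, a) = 1{ψ ≠ a}/max(η, p(ψ)), whose posterior risk r_η(a) = ∑_{ψ ≠ a} q(ψ)/max(η, p(ψ)) is finite. Suppose ψ* is the unique maximizer of the relative belief ratio, i.e., q(a)/p(a) < q(ψ*)/p(ψ*) for all a ≠ ψ*. Then for any sequence η_n > 0 with η_n → 0 and any sequence a_n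 ∈ Ψ such that a_n minimizes r_{η_n} over Ψ, one has a_n = ψ* for all sufficiently large n; in particular the Bayes rules converge to the least relative surprise estimate as η → 0. -/
/-!
The posterior risk is `r_η(a) = S_η - q(a) / max(η, p(a))` with `S_η = ∑ q(ψ) / max(η, p(ψ))`
independent of `a`, so a Bayes rule maximizes `q(a) / max(η, p(a))`. Once `η ≤ p(ψ*)`, this
quantity equals the relative belief ratio at `ψ*`, while at every other `a` it is at most
`q(a) / p(a)`, which is strictly smaller.
-/

open Filter
open scoped Classical Topology

theorem summable_div_max {Ψ : Type*} {p q : Ψ → ℝ} {η : ℝ} (hq : ∀ ψ, 0 ≤ q ψ)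
    (hqs : Summable q) (hη : 0 < η) : Summable fun ψ => q ψ / max η (p ψ) :=
  (hqs.div_const η).of_nonneg_of_le (fun ψ => div_nonneg (hq ψ) (hη.le.trans (le_max_left _ _)))
    fun ψ => div_le_div_of_nonneg_left (hq ψ) hη (le_max_left _ _)

theorem tsum_ite_ne_eq_tsum_sub {Ψ : Type*} {f : Ψ → ℝ} (hf : Summable f) (a : Ψ) :
    ∑' ψ, (if ψ ≠ a then f ψ else 0) = ∑' ψ, f ψ - f a := by
  rw [hf.tsum_eq_add_tsum_ite a]
  simp only [ite_not, add_sub_cancel_left]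

theorem div_max_lt_div_max {x y u v η : ℝ} (hx : 0 ≤ x) (hu : 0 < u) (hηv : η ≤ v)
    (h : x / u < y / v) : x / max η u < y / max η v := by
  rw [max_eq_right hηv]
  exact (div_le_div_of_nonneg_left hx hu (le_max_right _ _)).trans_lt h

theorem stmt_2_general {Ψ : Type*} (p q : Ψ → ℝ)
    (hp : ∀ ψ, 0 < p ψ)
    (hq : ∀ ψ, 0 ≤ q ψ) (hq1 : ∑' ψ, q ψ = 1)
    (r : ℝ → Ψ → ℝ)
    (hr : ∀ η a, r η a = ∑' ψ, (if ψ ≠ a then q ψ / max η (p ψ) else 0))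
    (ψstar : Ψ)
    (hstar : ∀ a, a ≠ ψstar → q a / p a < q ψstar / p ψstar)
    (η : ℕ → ℝ) (hη : ∀ n, 0 < η n) (hη0 : Tendsto η atTop (𝓝 0))
    (a : ℕ → Ψ) (ha : ∀ n, ∀ b, r (η n) (a n) ≤ r (η n) b) :
    ∀ᶠ n in atTop, a n = ψstar := by
  have hqs : Summable q := by
    by_contra h
    simp [tsum_eq_zero_of_not_summable h] at hq1
  filter_upwards [hη0.eventually (gt_mem_nhds (hp ψstar))] with n hn
  by_contra hne
  have hrisk : ∀ b, r (η n) b = ∑' ψ, q ψ / max (η n) (p ψ) - q b / max (η n) (p b) := by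
    intro b
    rw [hr, tsum_ite_ne_eq_tsum_sub (summable_div_max hq hqs (hη n))]
  have hbayes := ha n ψstar
  rw [hrisk, hrisk] at hbayes
  linarith [div_max_lt_div_max (hq (a n)) (hp (a n)) hn.le (hstar (a n) hne)]

/-- For a countable `Ψ`, prior pmf `p > 0` and posterior pmf `q`,
with the loss `L_η(ψ,a) = 1{ψ ≠ a}/max(η, p ψ)` and posterior risk
`r η a = ∑' ψ, 1{ψ ≠ a} q ψ / max(η, p ψ)`, if `ψ*` is the unique maximizer of the
relative belief ratio `q ψ / p ψ`, then for any positive sequence `η_n → 0` and any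
sequence of Bayes rule values `a_n` (minimizers of `r (η n)`), eventually `a_n = ψ*`. -/
theorem stmt_2 {Ψ : Type*} [Countable Ψ] (p q : Ψ → ℝ)
    (hp : ∀ ψ, 0 < p ψ) (hp1 : ∑' ψ, p ψ = 1)
    (hq : ∀ ψ, 0 ≤ q ψ) (hq1 : ∑' ψ, q ψ = 1)
    (r : ℝ → Ψ → ℝ)
    (hr : ∀ η a, r η a = ∑' ψ, (if ψ ≠ a then q ψ / max η (p ψ) else 0))
    (ψstar : Ψ)
    (hstar : ∀ a, a ≠ ψstar → q a / p a < q ψstar / p ψstar)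
    (η : ℕ → ℝ) (hη : ∀ n, 0 < η n) (hη0 : Tendsto η atTop (𝓝 0))
    (a : ℕ → Ψ) (ha : ∀ n, ∀ b, r (η n) (a n) ≤ r (η n) b) :
    ∀ᶠ n in atTop, a n = ψstar :=
  stmt_2_general p q hp hq hq1 r hr ψstar hstar η hη hη0 a ha
end

section
/- Let Θ and 𝒳 be measurable spaces, Π a probability measure on Θ, P a Markov kernel from Θ to 𝒳, ΨT a countable set, Ψ : Θ → ΨT measurable with p(ψ) = Π(Ψ⁻¹{ψ}) > 0 for all ψ, and h : ΨT → [0, ∞) with ∑_ψ h(ψ) p(ψ) < ∞. Let M be the prior predictive measure M(A) = ∫_Θ P_θ(A) Π(dθ), and let q(ψ | x) be posterior probability mass functions, measurable in x with ∑_ψ q(ψ | x) = 1, satisfying the Bayes property ∫_A q(ψ | x) M(dx) = ∫_{Ψ⁻¹{ψ}} P_θ(A) Π(dθ) for every ψ and every measurable A ⊆ 𝒳. Let δ : 𝒳 → ΨT be measurable with δ(x) a maximizer of ψ ↦ q(ψ | x)/p(ψ) for every x. Then δ is Bayesian unbiased for the loss L(θ, a) = 1{Ψ(θ) ≠ a}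 h(Ψ(θ)): ∫_Θ ∫_Θ ∫_𝒳 L(θ′, δ(x)) P_θ(dx) Π(dθ) Π(dθ′) ≥ ∫_Θ ∫_𝒳 L(θ, δ(x)) P_θ(dx) Π(dθ). -/
open MeasureTheory ProbabilityTheory Set
open scoped Classical

/-!
Write `A ψ = δ ⁻¹' {ψ}`. Splitting `Θ` into the fibres of `Ψ`, the risk of `δ` is
`∑ ψ, h ψ ∫_{(A ψ)ᶜ} q ψ dM`, while its risk against an independent prior draw is
`∑ ψ, h ψ * p ψ * M (A ψ)ᶜ`. Since `q (·) x` and `p` are both probability vectors, the maximal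
ratio `q (δ x) x / p (δ x)` is at least `1`, i.e. `q ψ ≥ p ψ` on `A ψ`. As `∫ q ψ dM = p ψ`,
this forces `∫_{(A ψ)ᶜ} q ψ dM ≤ p ψ * M (A ψ)ᶜ`, and the two series compare termwise.
-/

lemma le_of_forall_div_le_div {ι : Type*} {p q : ι → ℝ} (hp : ∀ i, 0 < p i) (hps : HasSum p 1)
    (hq : ∑' i, q i = 1) {i₀ : ι} (hmax : ∀ i, q i / p i ≤ q i₀ / p i₀) : p i₀ ≤ q i₀ := by
  by_contra! hlt
  have hqs : HasSum q 1 := by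
    by_cases hs : Summable q
    · exact hq ▸ hs.hasSum
    · exact absurd hq (by simp [tsum_eq_zero_of_not_summable hs])
  have := hasSum_le (fun i => (div_le_iff₀ (hp i)).1 (hmax i)) hqs (hps.mul_left (q i₀ / p i₀))
  rw [mul_one, one_le_div (hp i₀)] at this
  linarith

section Fibers

variable {α β E : Type*} [MeasurableSpace α] [MeasurableSpace β] [MeasurableSingletonClass β]
  [NormedAddCommGroup E] [NormedSpace ℝ E] {μ : Measure α} {f : α → β}

lemma integral_ite_ne [CompleteSpace E] (hf : Measurable f) (b : β) (c : E) :
    ∫ a, (if b ≠ f a then c else 0) ∂μ = μ.real (f ⁻¹' {b})ᶜ • c := by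
  rw [← integral_indicator_const c (hf (measurableSet_singleton b)).compl]
  congr with a
  simp [indicator, eq_comm]

lemma setIntegral_fiber_comp (hf : Measurable f) (G : β → α → E) (b : β) :
    ∫ a in f ⁻¹' {b}, G (f a) a ∂μ = ∫ a in f ⁻¹' {b}, G b a ∂μ :=
  setIntegral_congr_fun (hf (measurableSet_singleton b)) fun a (ha : f a = b) => by rw [ha]

variable [Countable β]

lemma hasSum_setIntegral_fiber [CompleteSpace E] (hf : Measurable f) {F : α → E}
    (hF : Integrable F μ) :
    HasSum (fun b => ∫ a in f ⁻¹' {b}, F a ∂μ) (∫ a, F a ∂μ) := by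
  have := hasSum_integral_iUnion (fun b => hf (measurableSet_singleton b))
    (pairwise_disjoint_fiber f) hF.integrableOn
  rwa [← preimage_iUnion, iUnion_of_singleton, preimage_univ, setIntegral_univ] at this

lemma integral_le_integral_of_setIntegral_fiber_le (hf : Measurable f) {F G : α → ℝ}
    (hF : Integrable F μ) (hG : Integrable G μ)
    (hle : ∀ b, ∫ a in f ⁻¹' {b}, F a ∂μ ≤ ∫ a in f ⁻¹' {b}, G a ∂μ) :
    ∫ a, F a ∂μ ≤ ∫ a, G a ∂μ :=
  hasSum_le hle (hasSum_setIntegral_fiber hf hF) (hasSum_setIntegral_fiber hf hG)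

lemma hasSum_measureReal_fiber [IsFiniteMeasure μ] (hf : Measurable f) :
    HasSum (fun b => μ.real (f ⁻¹' {b})) (μ.real univ) := by
  simpa using hasSum_setIntegral_fiber hf (integrable_const (1 : ℝ)) (μ := μ)

lemma integrable_comp_of_summable [IsFiniteMeasure μ] (hf : Measurable f) {g : β → ℝ}
    (hg : Summable fun b => μ.real (f ⁻¹' {b}) * ‖g b‖) : Integrable (fun a => g (f a)) μ := by
  have : Integrable g (μ.map f) := by
    rw [← Measure.sum_smul_dirac (μ.map f)]
    refine integrable_sum_dirac (fun b => measure_ne_top _ _) ?_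
    simpa [← measureReal_def, map_measureReal_apply hf (measurableSet_singleton _)] using hg
  exact this.comp_measurable hf

lemma integrable_measureReal_kernel_mul {X : Type*} [MeasurableSpace X] (κ : Kernel α X)
    [IsMarkovKernel κ] (hf : Measurable f) {s : β → Set X} (hs : ∀ b, MeasurableSet (s b))
    {g : β → ℝ} (hg : Integrable (fun a => g (f a)) μ) :
    Integrable (fun a => (κ a).real (s (f a)) * g (f a)) μ := by
  refine hg.norm.mono' ?_ (ae_of_all _ fun a => ?_)
  · have : Measurable fun z : α × β => (κ z.1).real (s z.2) * g z.2 :=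
      measurable_from_prod_countable_left fun b => by
        simpa only [measureReal_def] using (κ.measurable_coe (hs b)).ennreal_toReal.mul_const (g b)
    exact (this.comp (measurable_id.prodMk hf)).aestronglyMeasurable
  · rw [norm_mul, Real.norm_of_nonneg measureReal_nonneg]
    exact mul_le_of_le_one_left (norm_nonneg _) measureReal_le_one

end Fibers

lemma integral_measureReal_kernel {Θ X : Type*} [MeasurableSpace Θ] [MeasurableSpace X]
    (κ : Kernel Θ X) [IsFiniteKernel κ] (μ : Measure Θ) {s : Set X}
    (hs : MeasurableSet s) : ∫ θ, (κ θ).real s ∂μ = (κ ∘ₘ μ).real s := by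
  simp only [measureReal_def]
  rw [Measure.bind_apply hs κ.aemeasurable,
    integral_toReal (κ.measurable_coe hs).aemeasurable (ae_of_all _ fun _ => measure_lt_top _ _)]

lemma setIntegral_compl_le_of_const_le {X : Type*} [MeasurableSpace X] {ν : Measure X}
    [IsProbabilityMeasure ν] {g : X → ℝ} {s : Set X} {c : ℝ} (hs : MeasurableSet s)
    (hg : Integrable g ν) (hmean : ∫ x, g x ∂ν = c) (hle : ∀ x ∈ s, c ≤ g x) :
    ∫ x in sᶜ, g x ∂ν ≤ c * ν.real sᶜ := by
  have hsplit := integral_add_compl hs hg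
  have hlow := setIntegral_ge_of_const_le_real hs (measure_ne_top ν s) hle hg.integrableOn
  rw [probReal_compl_eq_one_sub hs]
  linarith

theorem stmt_5_general {Θ 𝒳 : Type*} [MeasurableSpace Θ] [MeasurableSpace 𝒳]
    (Pri : Measure Θ) [IsProbabilityMeasure Pri]
    (P : Kernel Θ 𝒳) [IsMarkovKernel P]
    {ΨT : Type*} [Countable ΨT] [MeasurableSpace ΨT] [MeasurableSingletonClass ΨT]
    (Ψ : Θ → ΨT) (hΨ : Measurable Ψ)
    (p : ΨT → ℝ) (hp : ∀ ψ, p ψ = (Pri (Ψ ⁻¹' {ψ})).toReal)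
    (hppos : ∀ ψ, 0 < p ψ)
    (h : ΨT → ℝ) (hh : ∀ ψ, 0 ≤ h ψ) (hhsum : Summable fun ψ => h ψ * p ψ)
    (M : Measure 𝒳)
    (hM : ∀ A : Set 𝒳, MeasurableSet A → M A = ∫⁻ θ, P θ A ∂Pri)
    (q : ΨT → 𝒳 → ℝ)
    (hqsum : ∀ x, ∑' ψ, q ψ x = 1)
    (hBayes : ∀ (ψ : ΨT) (A : Set 𝒳), MeasurableSet A →
      ∫ x in A, q ψ x ∂M = ∫ θ in Ψ ⁻¹' {ψ}, ((P θ) A).toReal ∂Pri)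
    (δ : 𝒳 → ΨT) (hδ : Measurable δ)
    (hmax : ∀ x ψ, q ψ x / p ψ ≤ q (δ x) x / p (δ x)) :
    ∫ θ, ∫ x, (if Ψ θ ≠ δ x then h (Ψ θ) else 0) ∂(P θ) ∂Pri
      ≤ ∫ θ', ∫ θ, ∫ x, (if Ψ θ' ≠ δ x then h (Ψ θ') else 0) ∂(P θ) ∂Pri ∂Pri := by
  obtain rfl : M = P ∘ₘ Pri :=
    Measure.ext fun A hA => by rw [hM A hA, Measure.bind_apply hA P.aemeasurable]
  simp only [← measureReal_def] at hp hBayes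
  have hA : ∀ ψ, MeasurableSet (δ ⁻¹' {ψ}) := fun ψ => hδ (measurableSet_singleton ψ)
  have hkey : ∀ x, p (δ x) ≤ q (δ x) x := fun x =>
    le_of_forall_div_le_div hppos (by simpa [← hp] using hasSum_measureReal_fiber hΨ (μ := Pri))
      (hqsum x) (hmax x)
  have hfiber : ∀ ψ, ∫ θ in Ψ ⁻¹' {ψ}, (P θ).real (δ ⁻¹' {ψ})ᶜ ∂Pri
      ≤ p ψ * (P ∘ₘ Pri).real (δ ⁻¹' {ψ})ᶜ := fun ψ => by
    have hmean : ∫ x, q ψ x ∂(P ∘ₘ Pri) = p ψ := by simpa [hp] using hBayes ψ univ .univ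
    rw [← hBayes ψ _ (hA ψ).compl]
    exact setIntegral_compl_le_of_const_le (hA ψ)
      (.of_integral_ne_zero (hmean ▸ (hppos ψ).ne')) hmean fun x hx => hx ▸ hkey x
  have hhΨ : Integrable (fun θ => h (Ψ θ)) Pri := integrable_comp_of_summable hΨ <| by
    simpa [← hp, Real.norm_of_nonneg (hh _), mul_comm] using hhsum
  simp only [integral_ite_ne hδ, smul_eq_mul, integral_mul_const,
    integral_measureReal_kernel P Pri (hA _).compl]
  refine integral_le_integral_of_setIntegral_fiber_le hΨ
    (integrable_measureReal_kernel_mul P hΨ (fun ψ => (hA ψ).compl) hhΨ)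
    (integrable_measureReal_kernel_mul (Kernel.const Θ (P ∘ₘ Pri)) hΨ (fun ψ => (hA ψ).compl) hhΨ)
    fun ψ => ?_
  rw [setIntegral_fiber_comp hΨ fun ψ θ => (P θ).real (δ ⁻¹' {ψ})ᶜ * h ψ,
    setIntegral_fiber_comp hΨ fun ψ _ => (P ∘ₘ Pri).real (δ ⁻¹' {ψ})ᶜ * h ψ,
    integral_mul_const, setIntegral_const, ← hp, smul_eq_mul, ← mul_assoc]
  exact mul_le_mul_of_nonneg_right (hfiber ψ) (hh ψ)

/-- With a proper prior `Pri`, Markov kernel `P`, countable parameter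
of interest `Ψ` with marginal prior pmf `p > 0`, loss `L(θ,a) = 1{Ψ θ ≠ a} h(Ψ θ)`
with `∑' ψ, h ψ * p ψ < ∞`, prior predictive `M`, and marginal posterior pmfs
`q ψ x` satisfying the Bayes property, any measurable selector `δ` of maximizers of
the relative belief ratio `ψ ↦ q ψ x / p ψ` (the LRSE) is Bayesian unbiased. -/
theorem stmt_5 {Θ 𝒳 : Type*} [MeasurableSpace Θ] [MeasurableSpace 𝒳]
    (Pri : Measure Θ) [IsProbabilityMeasure Pri]
    (P : Kernel Θ 𝒳) [IsMarkovKernel P]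
    {ΨT : Type*} [Countable ΨT] [MeasurableSpace ΨT] [MeasurableSingletonClass ΨT]
    (Ψ : Θ → ΨT) (hΨ : Measurable Ψ)
    (p : ΨT → ℝ) (hp : ∀ ψ, p ψ = (Pri (Ψ ⁻¹' {ψ})).toReal)
    (hppos : ∀ ψ, 0 < p ψ)
    (h : ΨT → ℝ) (hh : ∀ ψ, 0 ≤ h ψ) (hhsum : Summable fun ψ => h ψ * p ψ)
    (M : Measure 𝒳)
    (hM : ∀ A : Set 𝒳, MeasurableSet A → M A = ∫⁻ θ, P θ A ∂Pri)
    (q : ΨT → 𝒳 → ℝ) (hqmeas : ∀ ψ, Measurable (q ψ))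
    (hqnn : ∀ ψ x, 0 ≤ q ψ x) (hqsum : ∀ x, ∑' ψ, q ψ x = 1)
    (hBayes : ∀ (ψ : ΨT) (A : Set 𝒳), MeasurableSet A →
      ∫ x in A, q ψ x ∂M = ∫ θ in Ψ ⁻¹' {ψ}, ((P θ) A).toReal ∂Pri)
    (δ : 𝒳 → ΨT) (hδ : Measurable δ)
    (hmax : ∀ x ψ, q ψ x / p ψ ≤ q (δ x) x / p (δ x)) :
    ∫ θ, ∫ x, (if Ψ θ ≠ δ x then h (Ψ θ) else 0) ∂(P θ) ∂Pri
      ≤ ∫ θ', ∫ θ, ∫ x, (if Ψ θ' ≠ δ x then h (Ψ θ') else 0) ∂(P θ) ∂Pri ∂Pri :=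
  stmt_5_general Pri P Ψ hΨ p hp hppos h hh hhsum M hM q hqsum hBayes δ hδ hmax
end

section
/- Let Θ and 𝒳 be measurable spaces, Π a probability measure on Θ, P a Markov kernel from Θ to 𝒳, ΨT a countable set, Ψ : Θ → ΨT measurable with p(ψ) = Π(Ψ⁻¹{ψ}) > 0 for all ψ, and h : ΨT → [0, ∞) with ∑_ψ h(ψ) p(ψ) < ∞. Let M be the prior predictive measure and q(ψ | x) posterior probability mass functions satisfying the Bayes property ∫_A q(ψ | x) M(dx) = ∫_{Ψ⁻¹{ψ}} P_θ(A) Π(dθ) for every ψ and every measurable A. If δ : 𝒳 → ΨT is measurable and satisfies q(δ(x) | x) ≥ p(δ(x)) for M-almost every x, then δ is Bayesian unbiased for the loss L(θ, a) = 1{Ψ(θ) ≠ a} h(Ψ(θ)): ∫_Θ ∫_Θ ∫_𝒳 L(θ′, δ(x)) P_θ(dx) Π(dθ) Π(dθ′) ≥ ∫_Θ ∫_𝒳 L(θ, δ(x)) P_θ(dx) Π(dθ). -/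
open MeasureTheory ProbabilityTheory
open scoped Classical

/-!
Write `B ψ = δ⁻¹{ψ}` for the region where `δ` decides `ψ`. Splitting the prior along the fibres
`Ψ⁻¹{ψ}`, the Bayes risk is `∑ ψ, h ψ ∫_{(B ψ)ᶜ} q(ψ | ·) dM`, while the risk against an
independent draw from the prior is `∑ ψ, h ψ p ψ M((B ψ)ᶜ)`. Since `q(ψ | ·)` has total
`M`-mass `p ψ` and is at least `p ψ` on `B ψ`, its mass outside `B ψ` is at most
`p ψ (1 - M(B ψ)) = p ψ M((B ψ)ᶜ)`, which compares the two series term by term.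
-/

theorem le_one_of_tsum_eq_one {ι : Type*} {f : ι → ℝ} (hf : ∀ i, 0 ≤ f i) (h1 : ∑' i, f i = 1)
    (i : ι) : f i ≤ 1 := by
  have hsum : Summable f := by
    by_contra hns
    simp [tsum_eq_zero_of_not_summable hns] at h1
  exact h1 ▸ hsum.le_tsum i fun j _ => hf j

theorem integrable_of_tsum_eq_one {ι α : Type*} [MeasurableSpace α] {μ : Measure α}
    [IsFiniteMeasure μ] {q : ι → α → ℝ} {i : ι} (hmeas : Measurable (q i))
    (hnn : ∀ j x, 0 ≤ q j x) (hsum : ∀ x, ∑' j, q j x = 1) : Integrable (q i) μ :=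
  (integrable_const 1).mono' hmeas.aestronglyMeasurable (ae_of_all _ fun x => by
    rw [Real.norm_of_nonneg (hnn i x)]
    exact le_one_of_tsum_eq_one (hnn · x) (hsum x) i)

theorem integral_ite_ne_eq {𝒳 ΨT : Type*} [MeasurableSpace 𝒳] [MeasurableSpace ΨT]
    [MeasurableSingletonClass ΨT] {δ : 𝒳 → ΨT} (hδ : Measurable δ) (ν : Measure 𝒳)
    (a : ΨT) (c : ℝ) :
    ∫ x, (if a ≠ δ x then c else 0) ∂ν = c * ν.real (δ ⁻¹' {a})ᶜ := by
  have hind : (fun x => if a ≠ δ x then c else 0) = (δ ⁻¹' {a})ᶜ.indicator fun _ => c := by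
    ext x
    simp [Set.indicator_apply, eq_comm]
  rw [hind, integral_indicator_const _ (hδ (measurableSet_singleton a)).compl, smul_eq_mul,
    mul_comm]

theorem MeasureTheory.Measure.measureReal_comp_apply {α β : Type*} [MeasurableSpace α]
    [MeasurableSpace β] {μ : Measure α} {κ : Kernel α β} [IsFiniteKernel κ] {s : Set β}
    (hs : MeasurableSet s) :
    (κ ∘ₘ μ).real s = ∫ a, (κ a).real s ∂μ := by
  rw [measureReal_def, Measure.bind_apply hs κ.aemeasurable,
    ← integral_toReal (κ.measurable_coe hs).aemeasurable (ae_of_all _ fun a => measure_lt_top _ _)]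
  rfl

theorem setIntegral_compl_le_mul_measureReal_compl {Ω : Type*} [MeasurableSpace Ω]
    {μ : Measure Ω} [IsProbabilityMeasure μ] {f : Ω → ℝ} {s : Set Ω} {c : ℝ}
    (hs : MeasurableSet s) (hf : Integrable f μ) (hint : ∫ x, f x ∂μ = c)
    (hle : ∀ᵐ x ∂μ, x ∈ s → c ≤ f x) :
    ∫ x in sᶜ, f x ∂μ ≤ c * μ.real sᶜ := by
  have hs_ge : c * μ.real s ≤ ∫ x in s, f x ∂μ := by
    rw [mul_comm, ← smul_eq_mul, ← setIntegral_const]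
    exact setIntegral_mono_on_ae (integrable_const c).integrableOn hf.integrableOn hs hle
  have hsplit := integral_add_compl hs hf
  rw [probReal_compl_eq_one_sub hs]
  linarith

section Fibers

variable {Θ ΨT : Type*} [MeasurableSpace Θ] [MeasurableSpace ΨT] [MeasurableSingletonClass ΨT]
  {μ : Measure Θ} {Ψ : Θ → ΨT}

theorem hasSum_setIntegral_preimage_singleton [Countable ΨT] {E : Type*} [NormedAddCommGroup E]
    [NormedSpace ℝ E] {f : Θ → E} (hΨ : Measurable Ψ) (hf : Integrable f μ) :
    HasSum (fun ψ => ∫ θ in Ψ ⁻¹' {ψ}, f θ ∂μ) (∫ θ, f θ ∂μ) := by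
  have hunion : (⋃ ψ, Ψ ⁻¹' {ψ}) = Set.univ := by
    rw [← Set.preimage_iUnion, Set.iUnion_singleton_eq_range, Set.range_id', Set.preimage_univ]
  simpa [hunion] using hasSum_integral_iUnion (fun ψ => hΨ (measurableSet_singleton ψ))
    (pairwise_disjoint_fiber Ψ) (hunion ▸ hf.integrableOn)

theorem setIntegral_preimage_singleton_comp {F : ΨT → Θ → ℝ} (hΨ : Measurable Ψ) (ψ : ΨT) :
    ∫ θ in Ψ ⁻¹' {ψ}, F (Ψ θ) θ ∂μ = ∫ θ in Ψ ⁻¹' {ψ}, F ψ θ ∂μ :=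
  setIntegral_congr_fun (hΨ (measurableSet_singleton ψ)) fun _ hθ => by rw [hθ]

theorem integrable_comp_of_summable_s6 [Countable ΨT] [IsFiniteMeasure μ] {h : ΨT → ℝ}
    (hΨ : Measurable Ψ) (hsum : Summable fun ψ => μ.real (Ψ ⁻¹' {ψ}) * ‖h ψ‖) :
    Integrable (fun θ => h (Ψ θ)) μ := by
  refine (integrable_map_measure (measurable_of_countable h).aestronglyMeasurable
    hΨ.aemeasurable).mp ?_
  rw [← Measure.sum_smul_dirac (μ.map Ψ)]
  refine integrable_sum_dirac (fun ψ => measure_ne_top _ _) ?_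
  simpa [Measure.map_apply hΨ (measurableSet_singleton _), measureReal_def] using hsum

theorem MeasureTheory.Integrable.mul_measureReal_comp [Countable ΨT] {𝒳 : Type*} [MeasurableSpace 𝒳]
    {h : ΨT → ℝ} (hh : Integrable (fun θ => h (Ψ θ)) μ) (hΨ : Measurable Ψ)
    (κ : Kernel Θ 𝒳) [IsMarkovKernel κ] {t : ΨT → Set 𝒳} (ht : ∀ ψ, MeasurableSet (t ψ)) :
    Integrable (fun θ => h (Ψ θ) * (κ θ).real (t (Ψ θ))) μ := by
  have hmeas : Measurable fun θ => (κ θ).real (t (Ψ θ)) :=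
    (measurable_from_prod_countable_left (f := fun p : Θ × ΨT => (κ p.1).real (t p.2))
      fun ψ => (κ.measurable_coe (ht ψ)).ennreal_toReal).comp (measurable_id.prodMk hΨ)
  refine hh.mul_bdd (c := 1) hmeas.aestronglyMeasurable (ae_of_all _ fun θ => ?_)
  rw [Real.norm_of_nonneg measureReal_nonneg]
  exact measureReal_le_one

end Fibers

section Posterior

variable {Θ 𝒳 : Type*} [MeasurableSpace Θ] [MeasurableSpace 𝒳]

def IsPosteriorDensity (μ : Measure Θ) (κ : Kernel Θ 𝒳) (S : Set Θ) (f : 𝒳 → ℝ) : Prop :=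
  ∀ A, MeasurableSet A → ∫ x in A, f x ∂(κ ∘ₘ μ) = ∫ θ in S, (κ θ).real A ∂μ

variable {μ : Measure Θ} {κ : Kernel Θ 𝒳} [IsMarkovKernel κ] {S : Set Θ} {f : 𝒳 → ℝ}

theorem IsPosteriorDensity.integral_eq (hf : IsPosteriorDensity μ κ S f) :
    ∫ x, f x ∂(κ ∘ₘ μ) = μ.real S := by
  simpa using hf Set.univ MeasurableSet.univ

theorem IsPosteriorDensity.setIntegral_measureReal_compl_le [IsProbabilityMeasure μ]
    (hf : IsPosteriorDensity μ κ S f) (hfi : Integrable f (κ ∘ₘ μ)) {s : Set 𝒳}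
    (hs : MeasurableSet s) (hle : ∀ᵐ x ∂(κ ∘ₘ μ), x ∈ s → μ.real S ≤ f x) :
    ∫ θ in S, (κ θ).real sᶜ ∂μ ≤ μ.real S * (κ ∘ₘ μ).real sᶜ := by
  rw [← hf _ hs.compl]
  exact setIntegral_compl_le_mul_measureReal_compl hs hfi hf.integral_eq hle

theorem IsPosteriorDensity.setIntegral_preimage_mul_measureReal_le [IsProbabilityMeasure μ]
    {ΨT : Type*} [MeasurableSpace ΨT] [MeasurableSingletonClass ΨT] {Ψ : Θ → ΨT} {δ : 𝒳 → ΨT}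
    {h : ΨT → ℝ} {ψ : ΨT} (hΨ : Measurable Ψ) (hδ : Measurable δ) (hh : 0 ≤ h ψ)
    (hf : IsPosteriorDensity μ κ (Ψ ⁻¹' {ψ}) f) (hfi : Integrable f (κ ∘ₘ μ))
    (hle : ∀ᵐ x ∂(κ ∘ₘ μ), δ x = ψ → μ.real (Ψ ⁻¹' {ψ}) ≤ f x) :
    ∫ θ in Ψ ⁻¹' {ψ}, h (Ψ θ) * (κ θ).real (δ ⁻¹' {Ψ θ})ᶜ ∂μ
      ≤ ∫ θ in Ψ ⁻¹' {ψ}, h (Ψ θ) * (κ ∘ₘ μ).real (δ ⁻¹' {Ψ θ})ᶜ ∂μ := by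
  rw [setIntegral_preimage_singleton_comp (F := fun ψ θ => h ψ * (κ θ).real (δ ⁻¹' {ψ})ᶜ) hΨ,
    setIntegral_preimage_singleton_comp (F := fun ψ _ => h ψ * (κ ∘ₘ μ).real (δ ⁻¹' {ψ})ᶜ) hΨ,
    integral_const_mul, setIntegral_const, smul_eq_mul, mul_left_comm]
  gcongr
  exact hf.setIntegral_measureReal_compl_le hfi (hδ (measurableSet_singleton ψ)) hle

end Posterior

theorem stmt_6_general {Θ 𝒳 : Type*} [MeasurableSpace Θ] [MeasurableSpace 𝒳]
    (Pri : Measure Θ) [IsProbabilityMeasure Pri]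
    (P : Kernel Θ 𝒳) [IsMarkovKernel P]
    {ΨT : Type*} [Countable ΨT] [MeasurableSpace ΨT] [MeasurableSingletonClass ΨT]
    (Ψ : Θ → ΨT) (hΨ : Measurable Ψ)
    (p : ΨT → ℝ) (hp : ∀ ψ, p ψ = (Pri (Ψ ⁻¹' {ψ})).toReal)
    (h : ΨT → ℝ) (hh : ∀ ψ, 0 ≤ h ψ) (hhsum : Summable fun ψ => h ψ * p ψ)
    (M : Measure 𝒳)
    (hM : ∀ A : Set 𝒳, MeasurableSet A → M A = ∫⁻ θ, P θ A ∂Pri)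
    (q : ΨT → 𝒳 → ℝ) (hqmeas : ∀ ψ, Measurable (q ψ))
    (hqnn : ∀ ψ x, 0 ≤ q ψ x) (hqsum : ∀ x, ∑' ψ, q ψ x = 1)
    (hBayes : ∀ (ψ : ΨT) (A : Set 𝒳), MeasurableSet A →
      ∫ x in A, q ψ x ∂M = ∫ θ in Ψ ⁻¹' {ψ}, ((P θ) A).toReal ∂Pri)
    (δ : 𝒳 → ΨT) (hδ : Measurable δ)
    (hub : ∀ᵐ x ∂M, p (δ x) ≤ q (δ x) x) :
    ∫ θ, ∫ x, (if Ψ θ ≠ δ x then h (Ψ θ) else 0) ∂(P θ) ∂Pri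
      ≤ ∫ θ', ∫ θ, ∫ x, (if Ψ θ' ≠ δ x then h (Ψ θ') else 0) ∂(P θ) ∂Pri ∂Pri := by
  obtain rfl : M = P ∘ₘ Pri :=
    Measure.ext fun A hA => by rw [hM A hA, Measure.bind_apply hA P.aemeasurable]
  have hB : ∀ ψ, MeasurableSet (δ ⁻¹' {ψ}) := fun ψ => hδ (measurableSet_singleton ψ)
  have hhΨ : Integrable (fun θ => h (Ψ θ)) Pri := integrable_comp_of_summable_s6 hΨ <|
    hhsum.congr fun ψ => by rw [hp, Real.norm_of_nonneg (hh ψ), mul_comm, measureReal_def]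
  simp_rw [integral_ite_ne_eq hδ, integral_const_mul,
    ← Measure.measureReal_comp_apply (hB _).compl]
  have hrisk := hasSum_setIntegral_preimage_singleton hΨ
    (hhΨ.mul_measureReal_comp hΨ P fun ψ => (hB ψ).compl)
  have hrisk_indep := hasSum_setIntegral_preimage_singleton hΨ
    (hhΨ.mul_measureReal_comp hΨ (Kernel.const Θ (P ∘ₘ Pri)) fun ψ => (hB ψ).compl)
  simp only [Kernel.const_apply] at hrisk_indep
  refine hasSum_le (fun ψ => ?_) hrisk hrisk_indep
  refine IsPosteriorDensity.setIntegral_preimage_mul_measureReal_le hΨ hδ (hh ψ) (hBayes ψ)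
    (integrable_of_tsum_eq_one (hqmeas ψ) hqnn hqsum) ?_
  filter_upwards [hub] with x hx (rfl : δ x = ψ)
  rwa [measureReal_def, ← hp]

/-- In the setting of a proper prior `Pri`, Markov kernel `P`,
countable parameter of interest `Ψ` with marginal prior pmf `p > 0`, loss
`L(θ,a) = 1{Ψ θ ≠ a} h(Ψ θ)` with `∑' ψ, h ψ * p ψ < ∞`, prior predictive `M` and
marginal posterior pmfs `q ψ x` satisfying the Bayes property: any measurable `δ`
with `q (δ x) x ≥ p (δ x)` for `M`-a.e. `x` is Bayesian unbiased. -/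
theorem stmt_6 {Θ 𝒳 : Type*} [MeasurableSpace Θ] [MeasurableSpace 𝒳]
    (Pri : Measure Θ) [IsProbabilityMeasure Pri]
    (P : Kernel Θ 𝒳) [IsMarkovKernel P]
    {ΨT : Type*} [Countable ΨT] [MeasurableSpace ΨT] [MeasurableSingletonClass ΨT]
    (Ψ : Θ → ΨT) (hΨ : Measurable Ψ)
    (p : ΨT → ℝ) (hp : ∀ ψ, p ψ = (Pri (Ψ ⁻¹' {ψ})).toReal)
    (hppos : ∀ ψ, 0 < p ψ)
    (h : ΨT → ℝ) (hh : ∀ ψ, 0 ≤ h ψ) (hhsum : Summable fun ψ => h ψ * p ψ)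
    (M : Measure 𝒳)
    (hM : ∀ A : Set 𝒳, MeasurableSet A → M A = ∫⁻ θ, P θ A ∂Pri)
    (q : ΨT → 𝒳 → ℝ) (hqmeas : ∀ ψ, Measurable (q ψ))
    (hqnn : ∀ ψ x, 0 ≤ q ψ x) (hqsum : ∀ x, ∑' ψ, q ψ x = 1)
    (hBayes : ∀ (ψ : ΨT) (A : Set 𝒳), MeasurableSet A →
      ∫ x in A, q ψ x ∂M = ∫ θ in Ψ ⁻¹' {ψ}, ((P θ) A).toReal ∂Pri)
    (δ : 𝒳 → ΨT) (hδ : Measurable δ)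
    (hub : ∀ᵐ x ∂M, p (δ x) ≤ q (δ x) x) :
    ∫ θ, ∫ x, (if Ψ θ ≠ δ x then h (Ψ θ) else 0) ∂(P θ) ∂Pri
      ≤ ∫ θ', ∫ θ, ∫ x, (if Ψ θ' ≠ δ x then h (Ψ θ') else 0) ∂(P θ) ∂Pri ∂Pri :=
  stmt_6_general Pri P Ψ hΨ p hp h hh hhsum M hM q hqmeas hqnn hqsum hBayes δ hδ hub
end

section
/- Let q : ℝ^k → ℝ be a continuous probability density with respect to Lebesgue measure and let Π_post denote the corresponding probability measure, Π_post(A) = ∫_A q. Let ψ_M ∈ ℝ^k and λ > 0 be such that for every ψ with ‖ψ − ψ_M‖ > λ one has q(ψ) < inf_{‖ζ − ψ_M‖ ≤ λ} q(ζ). Then any δ ∈ ℝ^k that maximizes ψ ↦ Π_post(closed ball of radius λ centered at ψ) satisfies ‖δ − ψ_M‖ ≤ 2λ. (Hence the posterior mode ψ_MAP, under this separation condition, is a limit of Bayes rules for the losses L_λ(θ, ψ) = 1{Ψ(θ) ∉ B_λ(ψ)} as λ → 0.) -/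
open MeasureTheory Metric
open scoped ENNReal

/-!
Suppose `‖δ - ψ_M‖ > 2λ`. Then `B_λ(δ)` is disjoint from `B_λ(ψ_M)`, so by the separation
condition the maximum `M` of the continuous density `q` on the compact ball `B_λ(δ)` is below
`m = inf_{B_λ(ψ_M)} q`. As the two balls have the same Lebesgue measure,
`Π_post(B_λ(δ)) ≤ M · vol < m · vol ≤ Π_post(B_λ(ψ_M))`, so `δ` is not a maximizer.
-/

theorem withDensity_lt_withDensity_of_le_of_lt_of_le {α : Type*} [MeasurableSpace α]
    {μ : Measure α} {f : α → ℝ≥0∞} {s t : Set α} {a b : ℝ≥0∞}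
    (hs : MeasurableSet s) (ht : MeasurableSet t) (hst : μ s = μ t)
    (ht₀ : μ t ≠ 0) (ht_top : μ t ≠ ∞)
    (hfs : ∀ x ∈ s, f x ≤ a) (hab : a < b) (hft : ∀ x ∈ t, b ≤ f x) :
    μ.withDensity f s < μ.withDensity f t := by
  rw [withDensity_apply _ hs, withDensity_apply _ ht]
  calc ∫⁻ x in s, f x ∂μ ≤ ∫⁻ _ in s, a ∂μ := setLIntegral_mono' hs hfs
    _ = a * μ t := by rw [setLIntegral_const, hst]
    _ < b * μ t := ENNReal.mul_lt_mul_left ht₀ ht_top hab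
    _ = ∫⁻ _ in t, b ∂μ := (setLIntegral_const t b).symm
    _ ≤ ∫⁻ x in t, f x ∂μ := setLIntegral_mono' ht hft

theorem lt_norm_sub_of_mem_closedBall_of_two_mul_lt {E : Type*} [SeminormedAddCommGroup E]
    {x y c : E} {r : ℝ} (hy : 2 * r < ‖y - c‖) (hx : x ∈ closedBall y r) : r < ‖x - c‖ := by
  have hdisj : Disjoint (closedBall y r) (closedBall c r) :=
    closedBall_disjoint_closedBall (by rwa [← two_mul, dist_eq_norm])
  simpa [dist_eq_norm] using hdisj.notMem_of_mem_left hx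

theorem stmt_11_general {k : ℕ} (q : EuclideanSpace ℝ (Fin k) → ℝ)
    (hqc : Continuous q) (hqnn : ∀ x, 0 ≤ q x)
    (Post : Measure (EuclideanSpace ℝ (Fin k)))
    (hPost : Post = volume.withDensity fun x => ENNReal.ofReal (q x))
    (ψM : EuclideanSpace ℝ (Fin k)) (lam : ℝ) (hlam : 0 < lam)
    (hsep : ∀ ψ, lam < ‖ψ - ψM‖ → q ψ < sInf (q '' closedBall ψM lam)) :
    ∀ δ : EuclideanSpace ℝ (Fin k),
      (∀ ψ, Post (closedBall ψ lam) ≤ Post (closedBall δ lam)) →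
      ‖δ - ψM‖ ≤ 2 * lam := by
  intro δ hδ
  by_contra! hfar
  set m := sInf (q '' closedBall ψM lam)
  have hm_le : ∀ x ∈ closedBall ψM lam, m ≤ q x := fun x hx =>
    csInf_le ⟨0, by rintro _ ⟨y, -, rfl⟩; exact hqnn y⟩ ⟨x, hx, rfl⟩
  obtain ⟨x₀, hx₀, hmax⟩ := (isCompact_closedBall δ lam).exists_isMaxOn
    (nonempty_closedBall.mpr hlam.le) hqc.continuousOn
  have hx₀m : q x₀ < m := hsep x₀ (lt_norm_sub_of_mem_closedBall_of_two_mul_lt hfar hx₀)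
  refine (hδ ψM).not_gt ?_
  rw [hPost]
  exact withDensity_lt_withDensity_of_le_of_lt_of_le measurableSet_closedBall
    measurableSet_closedBall ((Measure.addHaar_closedBall_center volume δ lam).trans
      (Measure.addHaar_closedBall_center volume ψM lam).symm)
    (measure_closedBall_pos volume ψM hlam).ne' measure_closedBall_lt_top.ne
    (fun x hx => ENNReal.ofReal_le_ofReal (hmax hx))
    (ENNReal.ofReal_lt_ofReal_iff'.mpr ⟨hx₀m, (hqnn x₀).trans_lt hx₀m⟩)
    (fun x hx => ENNReal.ofReal_le_ofReal (hm_le x hx))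

/-- Let `q` be a continuous probability density on `ℝ^k` with
associated measure `Π_post = volume.withDensity (ofReal ∘ q)`. If `ψ_M` and `λ > 0`
are such that `q ψ < inf_{‖ζ - ψ_M‖ ≤ λ} q ζ` whenever `‖ψ - ψ_M‖ > λ`, then any `δ`
maximizing `ψ ↦ Π_post(closedBall ψ λ)` satisfies `‖δ - ψ_M‖ ≤ 2λ`. -/
theorem stmt_11 {k : ℕ} (q : EuclideanSpace ℝ (Fin k) → ℝ)
    (hqc : Continuous q) (hqnn : ∀ x, 0 ≤ q x)
    (Post : Measure (EuclideanSpace ℝ (Fin k)))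
    (hPost : Post = volume.withDensity fun x => ENNReal.ofReal (q x))
    (hq1 : IsProbabilityMeasure Post)
    (ψM : EuclideanSpace ℝ (Fin k)) (lam : ℝ) (hlam : 0 < lam)
    (hsep : ∀ ψ, lam < ‖ψ - ψM‖ → q ψ < sInf (q '' closedBall ψM lam)) :
    ∀ δ : EuclideanSpace ℝ (Fin k),
      (∀ ψ, Post (closedBall ψ lam) ≤ Post (closedBall δ lam)) →
      ‖δ - ψM‖ ≤ 2 * lam :=
  stmt_11_general q hqc hqnn Post hPost ψM lam hlam hsep
end

section
/- Let Ψ be a finite set, p : Ψ → ℝ the prior probability mass function with p(ψ) > 0 for all ψ and ∑_ψ p(ψ) = 1, q : Ψ → ℝ the posterior probability mass function with q(ψ) ≥ 0 and ∑_ψ q(ψ) = 1, and let γ ∈ (0, 1]. For the loss L(ψ, a) = 1{ψ ≠ a}/p(ψ), the posterior risk of a is r(a) = ∑_ψ q(ψ)/p(ψ) − q(a)/p(a). Define the γ-lowest posterior loss region L_γ = {ψ : r(ψ) ≤ l_γ} where l_γ = inf{k : ∑_{ψ : r(ψ) ≤ k} q(ψ) ≥ γ}, and the γ-relative surprise region C_γ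 = {ψ : q(ψ)/p(ψ) ≥ c_γ} where c_γ = sup{k : ∑_{ψ : q(ψ)/p(ψ) ≥ k} q(ψ) ≥ γ}. Then L_γ = C_γ. -/
/-!
With `T = ∑ ψ, q ψ / p ψ` the risk is `r ψ = T - q ψ / p ψ`, so the lower level set `{r ≤ k}`
is the superlevel set `{T - k ≤ q / p}` of the relative belief ratio. The set of `k` defining
`l_γ` is therefore the reflection `k ↦ T - k` of the set defining `c_γ`, whence `l_γ = T - c_γ`.
The reflection exchanges `sInf` and `sSup` since the latter set is nonempty (the minimum ratio
has superlevel mass `1 ≥ γ`) and bounded above (beyond the maximum ratio the mass is `0 < γ`).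
-/

theorem csInf_setOf_sub_mem {α : Type*} [AddCommGroup α] [ConditionallyCompleteLattice α]
    [IsOrderedAddMonoid α] (a : α) {s : Set α} (hne : s.Nonempty) (hbdd : BddAbove s) :
    sInf {x | a - x ∈ s} = a - sSup s := by
  rw [← Set.preimage_ofPred_eq, ← Set.image_eq_preimage_of_inverse (sub_sub_cancel a)
    (sub_sub_cancel a)]
  exact ((OrderIso.subLeft a).map_csSup' hne hbdd).symm

section SuperlevelMass

variable {Ψ : Type*} [Fintype Ψ] (f q : Ψ → ℝ) {γ : ℝ}

theorem bddAbove_setOf_le_sum_indicator (hγ : 0 < γ) :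
    BddAbove {k : ℝ | γ ≤ ∑ ψ, {ψ | k ≤ f ψ}.indicator q ψ} := by
  obtain ⟨M, hM⟩ := (Set.finite_range f).bddAbove
  refine ⟨M, fun k hk => le_of_not_gt fun hMk => ?_⟩
  have hempty : {ψ | k ≤ f ψ} = ∅ := Set.eq_empty_of_forall_notMem fun ψ hψ =>
    (hM (Set.mem_range_self ψ)).not_gt (hMk.trans_le hψ)
  simp only [Set.mem_ofPred_eq, hempty, Set.indicator_empty, Finset.sum_const_zero] at hk
  exact hk.not_gt hγ

theorem nonempty_setOf_le_sum_indicator (hq1 : ∑ ψ, q ψ = 1) (hγ1 : γ ≤ 1) :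
    {k : ℝ | γ ≤ ∑ ψ, {ψ | k ≤ f ψ}.indicator q ψ}.Nonempty := by
  obtain ⟨m, hm⟩ := (Set.finite_range f).bddBelow
  have huniv : {ψ | m ≤ f ψ} = Set.univ :=
    Set.eq_univ_of_forall fun ψ => hm (Set.mem_range_self ψ)
  exact ⟨m, by simpa only [Set.mem_ofPred_eq, huniv, Set.indicator_univ, hq1] using hγ1⟩

end SuperlevelMass

theorem stmt_12_general {Ψ : Type*} [Fintype Ψ] (p q : Ψ → ℝ)
    (hq1 : ∑ ψ, q ψ = 1)
    (γ : ℝ) (hγ : 0 < γ) (hγ1 : γ ≤ 1)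
    (r : Ψ → ℝ) (hr : ∀ a, r a = (∑ ψ, q ψ / p ψ) - q a / p a)
    (Q : Set Ψ → ℝ) (hQ : ∀ S, Q S = ∑ ψ, S.indicator q ψ)
    (lγ : ℝ) (hl : lγ = sInf {k : ℝ | γ ≤ Q {ψ | r ψ ≤ k}})
    (cγ : ℝ) (hc : cγ = sSup {k : ℝ | γ ≤ Q {ψ | k ≤ q ψ / p ψ}}) :
    {ψ | r ψ ≤ lγ} = {ψ | cγ ≤ q ψ / p ψ} := by
  set T := ∑ ψ, q ψ / p ψ
  have hlevel : ∀ k, {ψ | r ψ ≤ k} = {ψ | T - k ≤ q ψ / p ψ} := fun k => by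
    ext ψ
    simp only [Set.mem_ofPred_eq, hr]
    exact sub_le_comm
  have hlc : lγ = T - cγ := by
    simp only [hl, hc, hQ, hlevel]
    exact csInf_setOf_sub_mem T (nonempty_setOf_le_sum_indicator _ q hq1 hγ1)
      (bddAbove_setOf_le_sum_indicator _ q hγ)
  rw [hlevel, hlc, sub_sub_cancel]

/-- **Theorem 8.** For finite `Ψ` with prior pmf `p > 0`, posterior
pmf `q` and `γ ∈ (0,1]`, under the loss `L(ψ,a) = 1{ψ ≠ a}/p ψ` the posterior risk is
`r a = ∑ ψ, q ψ / p ψ - q a / p a`; the `γ`-lowest posterior loss region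
`{ψ : r ψ ≤ l_γ}` coincides with the `γ`-relative surprise region
`{ψ : q ψ / p ψ ≥ c_γ}`. -/
theorem stmt_12 {Ψ : Type*} [Fintype Ψ] (p q : Ψ → ℝ)
    (hp : ∀ ψ, 0 < p ψ) (hp1 : ∑ ψ, p ψ = 1)
    (hq : ∀ ψ, 0 ≤ q ψ) (hq1 : ∑ ψ, q ψ = 1)
    (γ : ℝ) (hγ : 0 < γ) (hγ1 : γ ≤ 1)
    (r : Ψ → ℝ) (hr : ∀ a, r a = (∑ ψ, q ψ / p ψ) - q a / p a)
    (Q : Set Ψ → ℝ) (hQ : ∀ S, Q S = ∑ ψ, S.indicator q ψ)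
    (lγ : ℝ) (hl : lγ = sInf {k : ℝ | γ ≤ Q {ψ | r ψ ≤ k}})
    (cγ : ℝ) (hc : cγ = sSup {k : ℝ | γ ≤ Q {ψ | k ≤ q ψ / p ψ}}) :
    {ψ | r ψ ≤ lγ} = {ψ | cγ ≤ q ψ / p ψ} :=
  stmt_12_general p q hq1 γ hγ hγ1 r hr Q hQ lγ hl cγ hc
end

section
/- Let Ψ be a countable set, p : Ψ → ℝ the prior probability mass function with p(ψ) > 0 for all ψ and ∑_ψ p(ψ) = 1, q : Ψ → ℝ the posterior probability mass function with q(ψ) ≥ 0 and ∑_ψ q(ψ) = 1, and γ ∈ (0, 1]. For c ≥ 0 and η > 0 define S_c = {ψ : q(ψ)/p(ψ) ≥ c}, S_{η,c} = {ψ : q(ψ)/max(η, p(ψ)) ≥ c}, Q(S) = ∑_{ψ ∈ S} q(ψ), the γ-relative surprise region C_γ = S_{c_γ} with c_γ = sup{k : Q(S_k) ≥ γ}, and the γ-lowest posterior loss region L_{η,γ} = S_{η, l_{η,γ}} with l_{η,γ} = sup{k : Q(S_{η,k}) ≥ γ}. If Q(C_γ) = γ, then C_γ ⊆ liminf_{η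 → 0} L_{η,γ}; i.e., for every ψ ∈ C_γ there is η₀ > 0 such that ψ ∈ L_{η,γ} for all 0 < η < η₀. -/
/-!
Replacing the loss denominator `max η (p ψ)` by the smaller `p ψ` only raises scores, so every
superlevel set of the loss score lies in the corresponding relative-belief superlevel set and
`l η ≤ cγ` for every `η > 0`. Once `η < p ψ` the two scores of `ψ` coincide, hence
`q ψ / max η (p ψ) = q ψ / p ψ ≥ cγ ≥ l η`. The comparison needs `cγ` to be a genuine
supremum rather than the junk `sSup` of an unbounded set: some finite set leaves posterior mass
below `γ` outside it, so levels above the largest score on that set are not admissible.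
-/

def massLevels {Ψ : Type*} (q f : Ψ → ℝ) (γ : ℝ) : Set ℝ :=
  {k | γ ≤ ∑' ψ, {ψ | k ≤ f ψ}.indicator q ψ}

section
variable {Ψ : Type*} {q : Ψ → ℝ}

lemma tsum_indicator_mono (hq : 0 ≤ q) (hs : Summable q) {A B : Set Ψ} (hAB : A ⊆ B) :
    ∑' ψ, A.indicator q ψ ≤ ∑' ψ, B.indicator q ψ :=
  (hs.indicator A).tsum_le_tsum (Set.indicator_le_indicator_of_subset hAB hq) (hs.indicator B)

lemma exists_finset_tsum_indicator_compl_lt (q : Ψ → ℝ) {ε : ℝ} (hε : 0 < ε) :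
    ∃ F : Finset Ψ, ∑' ψ, (↑F : Set Ψ)ᶜ.indicator q ψ < ε := by
  obtain ⟨F, hF⟩ := ((tendsto_tsum_compl_atTop_zero q).eventually (gt_mem_nhds hε)).exists
  exact ⟨F, by rwa [← tsum_subtype]⟩

lemma bddAbove_massLevels (hq : 0 ≤ q) (hs : Summable q) {γ : ℝ} (hγ : 0 < γ) (f : Ψ → ℝ) :
    BddAbove (massLevels q f γ) := by
  obtain ⟨F, hF⟩ := exists_finset_tsum_indicator_compl_lt q hγ
  obtain ⟨M, hM⟩ := (F.finite_toSet.image f).bddAbove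
  refine ⟨M, fun k hk => not_lt.1 fun hMk => (hk.trans ?_).not_gt hF⟩
  refine tsum_indicator_mono hq hs fun ψ hψ hψF => ?_
  exact hMk.not_ge ((hM ⟨ψ, hψF, rfl⟩).trans' hψ)

lemma zero_mem_massLevels (hq1 : ∑' ψ, q ψ = 1) {γ : ℝ} (hγ1 : γ ≤ 1)
    {f : Ψ → ℝ} (hf : 0 ≤ f) : 0 ∈ massLevels q f γ := by
  have : {ψ | 0 ≤ f ψ} = Set.univ := Set.eq_univ_of_forall hf
  simp only [massLevels, Set.mem_ofPred_eq, this, Set.indicator_univ, hq1, hγ1]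

lemma sSup_massLevels_mono (hq : 0 ≤ q) (hs : Summable q) (hq1 : ∑' ψ, q ψ = 1) {γ : ℝ}
    (hγ : 0 < γ) (hγ1 : γ ≤ 1) {f g : Ψ → ℝ} (hf : 0 ≤ f) (hfg : f ≤ g) :
    sSup (massLevels q f γ) ≤ sSup (massLevels q g γ) :=
  csSup_le_csSup (bddAbove_massLevels hq hs hγ g) ⟨0, zero_mem_massLevels hq1 hγ1 hf⟩
    fun _ hk => hk.trans (tsum_indicator_mono hq hs fun ψ hψ => (Set.mem_ofPred.1 hψ).trans (hfg ψ))
end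

theorem stmt_13_general {Ψ : Type*} (p q : Ψ → ℝ)
    (hp : ∀ ψ, 0 < p ψ)
    (hq : ∀ ψ, 0 ≤ q ψ) (hq1 : ∑' ψ, q ψ = 1)
    (γ : ℝ) (hγ : 0 < γ) (hγ1 : γ ≤ 1)
    (Q : Set Ψ → ℝ) (hQ : ∀ S, Q S = ∑' ψ, S.indicator q ψ)
    (S : ℝ → Set Ψ) (hS : ∀ c, S c = {ψ | c ≤ q ψ / p ψ})
    (Sη : ℝ → ℝ → Set Ψ) (hSη : ∀ η c, Sη η c = {ψ | c ≤ q ψ / max η (p ψ)})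
    (cγ : ℝ) (hc : cγ = sSup {k : ℝ | γ ≤ Q (S k)})
    (Cγ : Set Ψ) (hC : Cγ = S cγ)
    (l : ℝ → ℝ) (hl : ∀ η, l η = sSup {k : ℝ | γ ≤ Q (Sη η k)})
    (L : ℝ → Set Ψ) (hL : ∀ η, L η = Sη η (l η)) :
    ∀ ψ ∈ Cγ, ∃ η₀ > 0, ∀ η, 0 < η → η < η₀ → ψ ∈ L η := by
  intro ψ hψ
  have hs : Summable q := by
    by_contra h
    simp [tsum_eq_zero_of_not_summable h] at hq1
  refine ⟨p ψ, hp ψ, fun η hη hηp => ?_⟩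
  have hlc : l η ≤ cγ := by
    simp only [hl, hc, hQ, hSη, hS]
    refine sSup_massLevels_mono hq hs hq1 hγ hγ1 (fun ψ => ?_) (fun ψ => ?_)
    · exact div_nonneg (hq ψ) (le_max_of_le_right (hp ψ).le)
    · exact div_le_div_of_nonneg_left (hq ψ) (hp ψ) (le_max_right η (p ψ))
  rw [hC, hS] at hψ
  rw [hL, hSη, Set.mem_ofPred_eq, max_eq_right hηp.le]
  exact hlc.trans hψ

/-- **Theorem 9, first part.** For countable `Ψ`, prior pmf `p > 0`,
posterior pmf `q`, `γ ∈ (0,1]`, with `S_c = {ψ : q ψ/p ψ ≥ c}`,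
`S_{η,c} = {ψ : q ψ/max(η, p ψ) ≥ c}`, `Q S = ∑'_{ψ ∈ S} q ψ`, the `γ`-relative
surprise region `C_γ = S_{c_γ}` and the `γ`-lowest posterior loss regions
`L_{η,γ} = S_{η, l_{η,γ}}`: if `Q C_γ = γ`, then `C_γ ⊆ liminf_{η → 0} L_{η,γ}`,
i.e. each `ψ ∈ C_γ` lies in `L_{η,γ}` for all sufficiently small `η > 0`. -/
theorem stmt_13 {Ψ : Type*} [Countable Ψ] (p q : Ψ → ℝ)
    (hp : ∀ ψ, 0 < p ψ) (hp1 : ∑' ψ, p ψ = 1)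
    (hq : ∀ ψ, 0 ≤ q ψ) (hq1 : ∑' ψ, q ψ = 1)
    (γ : ℝ) (hγ : 0 < γ) (hγ1 : γ ≤ 1)
    (Q : Set Ψ → ℝ) (hQ : ∀ S, Q S = ∑' ψ, S.indicator q ψ)
    (S : ℝ → Set Ψ) (hS : ∀ c, S c = {ψ | c ≤ q ψ / p ψ})
    (Sη : ℝ → ℝ → Set Ψ) (hSη : ∀ η c, Sη η c = {ψ | c ≤ q ψ / max η (p ψ)})
    (cγ : ℝ) (hc : cγ = sSup {k : ℝ | γ ≤ Q (S k)})
    (Cγ : Set Ψ) (hC : Cγ = S cγ)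
    (l : ℝ → ℝ) (hl : ∀ η, l η = sSup {k : ℝ | γ ≤ Q (Sη η k)})
    (L : ℝ → Set Ψ) (hL : ∀ η, L η = Sη η (l η))
    (hexact : Q Cγ = γ) :
    ∀ ψ ∈ Cγ, ∃ η₀ > 0, ∀ η, 0 < η → η < η₀ → ψ ∈ L η :=
  stmt_13_general p q hp hq hq1 γ hγ hγ1 Q hQ S hS Sη hSη cγ hc Cγ hC l hl L hL
end

section
/- Let Ψ be a countable set, p : Ψ → ℝ the prior probability mass function with p(ψ) > 0 for all ψ and ∑_ψ p(ψ) = 1, q : Ψ → ℝ the posterior probability mass function with q(ψ) ≥ 0 and ∑_ψ q(ψ) = 1, and 0 < γ < γ′ ≤ 1. With S_c = {ψ : q(ψ)/p(ψ) ≥ c}, S_{η,c} = {ψ : q(ψ)/max(η, p(ψ)) ≥ c}, Q(S) = ∑_{ψ ∈ S} q(ψ), C_{γ′} = S_{c_{γ′}} where c_{γ′} = sup{k : Q(S_k) ≥ γ′}, and L_{η,γ} = S_{η, l_{η,γ}} where l_{η,γ} = sup{k : Q(S_{η,k}) ≥ γ}: if Q(C_{γ′}) = γ′, then limsup_{η →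 0} L_{η,γ} ⊆ C_{γ′}; i.e., for every ψ ∉ C_{γ′} there is η₀ > 0 such that ψ ∉ L_{η,γ} for all 0 < η < η₀. -/
/-!
Let `r = q ψ / p ψ < c_{γ'}`. By the definition of `c_{γ'}` as a supremum there is a level
`k > r` with `Q (S k) ≥ γ' > γ`, and a finite set `F ⊆ S k` already carries mass `> γ`.
Once `η ≤ min_F p`, the weights `max η p` and `p` agree on `F`, so `F ⊆ S_{η,k}`; hence
`l_{η,γ} ≥ k > r ≥ q ψ / max η (p ψ)`, i.e. `ψ ∉ L_{η,γ}`.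
-/

open Filter Topology Set

section Levels

variable {Ψ : Type*} {q : Ψ → ℝ}

theorem sum_le_tsum_indicator_of_subset (hq : 0 ≤ q) (hsum : Summable q) {s : Set Ψ}
    {F : Finset Ψ} (hF : ↑F ⊆ s) : ∑ ψ ∈ F, q ψ ≤ ∑' ψ, s.indicator q ψ := by
  calc ∑ ψ ∈ F, q ψ = ∑ ψ ∈ F, s.indicator q ψ :=
        Finset.sum_congr rfl fun ψ hψ => (indicator_of_mem (hF hψ) q).symm
    _ ≤ ∑' ψ, s.indicator q ψ :=
        (hsum.indicator s).sum_le_tsum F fun ψ _ => indicator_nonneg (fun ψ _ => hq ψ) ψ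

theorem exists_finset_subset_lt_sum_of_lt_tsum_indicator (hsum : Summable q) {s : Set Ψ}
    {γ : ℝ} (hγ : γ < ∑' ψ, s.indicator q ψ) :
    ∃ F : Finset Ψ, ↑F ⊆ s ∧ γ < ∑ ψ ∈ F, q ψ := by
  obtain ⟨F, hF⟩ :=
    ((hsum.indicator s).hasSum.eventually (eventually_gt_nhds hγ)).exists
  classical
  refine ⟨F.filter (· ∈ s), fun ψ hψ => (Finset.mem_filter.1 hψ).2, ?_⟩
  simpa only [Finset.sum_filter, indicator_apply] using hF

theorem bddAbove_setOf_le_tsum_indicator_levelSet {γ B : ℝ} (hγ : 0 < γ) {g : Ψ → ℝ}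
    (hg : ∀ ψ, g ψ ≤ B) :
    BddAbove {k : ℝ | γ ≤ ∑' ψ, {ψ | k ≤ g ψ}.indicator q ψ} := by
  refine ⟨B, fun k hk => ?_⟩
  by_contra! hBk
  have hempty : {ψ | k ≤ g ψ} = ∅ :=
    eq_empty_iff_forall_notMem.2 fun ψ hψ => (hg ψ).not_gt (hBk.trans_le hψ)
  simp only [mem_ofPred_eq, hempty, indicator_empty, tsum_zero] at hk
  exact hk.not_gt hγ

end Levels

theorem exists_mem_gt_of_nonneg_of_lt_sSup {A : Set ℝ} {r : ℝ} (hr : 0 ≤ r)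
    (h : r < sSup A) : ∃ k ∈ A, r < k := by
  -- junk value: `sSup ∅ = 0` in `ℝ`
  rcases A.eq_empty_or_nonempty with rfl | hA
  · rw [Real.sSup_empty] at h
    exact absurd h hr.not_gt
  · exact exists_lt_of_lt_csSup hA h

theorem stmt_14_general {Ψ : Type*} (p q : Ψ → ℝ)
    (hp : ∀ ψ, 0 < p ψ)
    (hq : ∀ ψ, 0 ≤ q ψ) (hq1 : ∑' ψ, q ψ = 1)
    (γ γ' : ℝ) (hγ : 0 < γ) (hγγ' : γ < γ')
    (Q : Set Ψ → ℝ) (hQ : ∀ S, Q S = ∑' ψ, S.indicator q ψ)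
    (S : ℝ → Set Ψ) (hS : ∀ c, S c = {ψ | c ≤ q ψ / p ψ})
    (Sη : ℝ → ℝ → Set Ψ) (hSη : ∀ η c, Sη η c = {ψ | c ≤ q ψ / max η (p ψ)})
    (cγ' : ℝ) (hc : cγ' = sSup {k : ℝ | γ' ≤ Q (S k)})
    (Cγ' : Set Ψ) (hC : Cγ' = S cγ')
    (l : ℝ → ℝ) (hl : ∀ η, l η = sSup {k : ℝ | γ ≤ Q (Sη η k)})
    (L : ℝ → Set Ψ) (hL : ∀ η, L η = Sη η (l η)) :
    ∀ ψ, ψ ∉ Cγ' → ∃ η₀ > 0, ∀ η, 0 < η → η < η₀ → ψ ∉ L η := by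
  intro ψ₀ hψ₀
  have hsum : Summable q := by
    by_contra h
    exact zero_ne_one (tsum_eq_zero_of_not_summable h ▸ hq1)
  have hq_le_one : ∀ ψ, q ψ ≤ 1 := fun ψ => hq1 ▸ hsum.le_tsum ψ fun ψ _ => hq ψ
  rw [hC, hS, mem_ofPred_eq, not_le, hc] at hψ₀
  obtain ⟨k, hk_mass, hk_gt⟩ :=
    exists_mem_gt_of_nonneg_of_lt_sSup (div_nonneg (hq ψ₀) (hp ψ₀).le) hψ₀
  rw [mem_ofPred_eq, hQ, hS] at hk_mass
  obtain ⟨F, hFS, hF⟩ :=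
    exists_finset_subset_lt_sum_of_lt_tsum_indicator hsum (hγγ'.trans_le hk_mass)
  have h_small : ∀ᶠ η in 𝓝[>] 0, ∀ ψ ∈ F, η ≤ p ψ :=
    (F.eventually_all).2 fun ψ _ => nhdsWithin_le_nhds (eventually_le_nhds (hp ψ))
  obtain ⟨η₀, hη₀, hη₀F⟩ := (nhdsGT_basis 0).eventually_iff.1 h_small
  refine ⟨η₀, hη₀, fun η hη hηη₀ => ?_⟩
  have hF_loss : ↑F ⊆ {ψ | k ≤ q ψ / max η (p ψ)} := fun ψ hψ => by
    rw [mem_ofPred_eq, max_eq_right (hη₀F ⟨hη, hηη₀⟩ ψ hψ)]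
    exact hFS hψ
  have hk_le : k ≤ l η := by
    simp_rw [hl, hQ, hSη]
    refine le_csSup (bddAbove_setOf_le_tsum_indicator_levelSet (B := 1 / η) hγ fun ψ => ?_) ?_
    · exact div_le_div₀ zero_le_one (hq_le_one ψ) hη (le_max_left η (p ψ))
    · exact hF.le.trans (sum_le_tsum_indicator_of_subset hq hsum hF_loss)
  rw [hL, hSη, mem_ofPred_eq, not_le]
  calc q ψ₀ / max η (p ψ₀) ≤ q ψ₀ / p ψ₀ :=
        div_le_div_of_nonneg_left (hq ψ₀) (hp ψ₀) (le_max_right η _)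
    _ < k := hk_gt
    _ ≤ l η := hk_le

/-- **Theorem 9, second part.** For countable `Ψ`, prior pmf `p > 0`,
posterior pmf `q`, and `0 < γ < γ' ≤ 1`, with `S_c = {ψ : q ψ/p ψ ≥ c}`,
`S_{η,c} = {ψ : q ψ/max(η, p ψ) ≥ c}`, `Q S = ∑'_{ψ ∈ S} q ψ`, the `γ'`-relative
surprise region `C_{γ'} = S_{c_{γ'}}` and the `γ`-lowest posterior loss regions
`L_{η,γ} = S_{η, l_{η,γ}}`: if `Q C_{γ'} = γ'`, then
`limsup_{η → 0} L_{η,γ} ⊆ C_{γ'}`, i.e. each `ψ ∉ C_{γ'}` is outside `L_{η,γ}` for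
all sufficiently small `η > 0`. -/
theorem stmt_14 {Ψ : Type*} [Countable Ψ] (p q : Ψ → ℝ)
    (hp : ∀ ψ, 0 < p ψ) (hp1 : ∑' ψ, p ψ = 1)
    (hq : ∀ ψ, 0 ≤ q ψ) (hq1 : ∑' ψ, q ψ = 1)
    (γ γ' : ℝ) (hγ : 0 < γ) (hγγ' : γ < γ') (hγ'1 : γ' ≤ 1)
    (Q : Set Ψ → ℝ) (hQ : ∀ S, Q S = ∑' ψ, S.indicator q ψ)
    (S : ℝ → Set Ψ) (hS : ∀ c, S c = {ψ | c ≤ q ψ / p ψ})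
    (Sη : ℝ → ℝ → Set Ψ) (hSη : ∀ η c, Sη η c = {ψ | c ≤ q ψ / max η (p ψ)})
    (cγ' : ℝ) (hc : cγ' = sSup {k : ℝ | γ' ≤ Q (S k)})
    (Cγ' : Set Ψ) (hC : Cγ' = S cγ')
    (l : ℝ → ℝ) (hl : ∀ η, l η = sSup {k : ℝ | γ ≤ Q (Sη η k)})
    (L : ℝ → Set Ψ) (hL : ∀ η, L η = Sη η (l η))
    (hexact : Q Cγ' = γ') :
    ∀ ψ, ψ ∉ Cγ' → ∃ η₀ > 0, ∀ η, 0 < η → η < η₀ → ψ ∉ L η :=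
  stmt_14_general p q hp hq hq1 γ γ' hγ hγγ' Q hQ S hS Sη hSη cγ' hc Cγ' hC l hl L hL
end

section
/- Let Ψ be an open subset of ℝ^k with ν Lebesgue measure and the prior Π and posterior Π_post probability measures on Ψ with densities p and q with respect to ν, p continuous and strictly positive. Suppose {B_λ(ψ) : ψ ∈ Ψ} is a regular discretization of Ψ for each λ > 0 and that for every ψ ∈ Ψ, Π_post(B_λ(ψ))/Π(B_λ(ψ)) → q(ψ)/p(ψ) as λ → 0. Fix c > 0 with Π_post({ψ : q(ψ)/p(ψ) = c}) = 0, and define S_c = {ψ : q(ψ)/p(ψ) ≥ c} and S_{λ,c} = {ψ : Π_post(B_λ(ψ))/Π(B_λ(ψ)) ≥ c}. Then Π_post(S_{λ,c} Δ S_c) → 0 as λ → 0, where Δ denotes symmetric difference. -/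
open MeasureTheory Filter
open scoped Topology symmDiff

/-!
Off a posterior-null set, a point `ψ` lies in `Ψ` and `q ψ / p ψ ≠ c`. For such a point the
discretized ratio converges to a limit on one strict side of `c`, so eventually
`ψ ∈ S_{λ,c} ↔ ψ ∈ S_c`. The sets `S_{λ,c}` are countable unions of cells, hence measurable,
and dominated convergence (the posterior is finite) turns this pointwise statement into
`Π_post (S_{λ,c} ∆ S_c) → 0`.
-/

/-- A regular discretization of `Ψ`: for each `λ > 0`, each `ψ ∈ Ψ` lies in its
measurable cell `B λ ψ ⊆ Ψ`, the cells form a countable partition of `Ψ`, every cell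
has positive prior measure, and the supremum of the cell diameters tends to `0`. -/
structure IsRegularDiscretization {E : Type*} [MeasurableSpace E] [PseudoMetricSpace E]
    (Ψ : Set E) (Pri : MeasureTheory.Measure E) (B : ℝ → E → Set E) : Prop where
  mem_cell : ∀ ⦃l : ℝ⦄, 0 < l → ∀ ψ ∈ Ψ, ψ ∈ B l ψ
  measurable_cell : ∀ ⦃l : ℝ⦄, 0 < l → ∀ ψ ∈ Ψ, MeasurableSet (B l ψ)
  cell_subset : ∀ ⦃l : ℝ⦄, 0 < l → ∀ ψ ∈ Ψ, B l ψ ⊆ Ψ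
  partition : ∀ ⦃l : ℝ⦄, 0 < l → ∀ ψ ∈ Ψ, ∀ ψ' ∈ Ψ, ψ' ∈ B l ψ → B l ψ' = B l ψ
  countable_cells : ∀ ⦃l : ℝ⦄, 0 < l → Set.Countable (B l '' Ψ)
  pos_prior : ∀ ⦃l : ℝ⦄, 0 < l → ∀ ψ ∈ Ψ, 0 < Pri (B l ψ)
  diam_small : ∀ ε : ℝ, 0 < ε →
    ∃ l₀ > 0, ∀ l, 0 < l → l < l₀ → ∀ ψ ∈ Ψ, Metric.diam (B l ψ) < ε

theorem Filter.Tendsto.eventually_const_le_iff_of_ne {ι α : Type*} [LinearOrder α]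
    [TopologicalSpace α] [OrderClosedTopology α] {L : Filter ι} {f : ι → α} {a c : α}
    (hf : Tendsto f L (𝓝 a)) (hac : a ≠ c) : ∀ᶠ i in L, c ≤ f i ↔ c ≤ a := by
  rcases hac.lt_or_gt with hlt | hgt
  · filter_upwards [hf.eventually_lt_const hlt] with i hi
    simp only [hi.not_ge, hlt.not_ge]
  · filter_upwards [hf.eventually_const_lt hgt] with i hi
    simp only [hi.le, hgt.le]

theorem MeasureTheory.tendsto_measure_symmDiff_of_ae_eventually_mem_iff
    {α ι : Type*} [MeasurableSpace α] {μ : Measure α} [IsFiniteMeasure μ]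
    {L : Filter ι} [L.IsCountablyGenerated] {A : ι → Set α} {S : Set α}
    (hS : MeasurableSet S) (hA : ∀ᶠ i in L, MeasurableSet (A i))
    (h : ∀ᵐ x ∂μ, ∀ᶠ i in L, x ∈ A i ↔ x ∈ S) :
    Tendsto (fun i ↦ μ (A i ∆ S)) L (𝓝 0) := by
  have hlim := tendsto_lintegral_filter_of_dominated_convergence (μ := μ)
    (F := fun i ↦ (A i ∆ S).indicator 1) (f := fun _ ↦ 0) 1
    (by filter_upwards [hA] with i hi using measurable_one.indicator (hi.symmDiff hS))
    (Eventually.of_forall fun i ↦ ae_of_all _ fun x ↦ Set.indicator_le_self' (by simp) x)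
    (by simp)
    (by
      filter_upwards [h] with x hx
      refine tendsto_const_nhds.congr' ?_
      filter_upwards [hx] with i hi
      simp [Set.mem_symmDiff, hi])
  rw [lintegral_zero] at hlim
  refine hlim.congr' ?_
  filter_upwards [hA] with i hi
  exact lintegral_indicator_one (hi.symmDiff hS)

namespace IsRegularDiscretization

variable {E : Type*} [MeasurableSpace E] [PseudoMetricSpace E] {Ψ : Set E} {Pri : Measure E}
  {B : ℝ → E → Set E}

theorem measurableSet_sep_cell (hB : IsRegularDiscretization Ψ Pri B) {l : ℝ} (hl : 0 < l)
    (P : Set E → Prop) : MeasurableSet {ψ ∈ Ψ | P (B l ψ)} := by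
  have hunion : {ψ ∈ Ψ | P (B l ψ)} = ⋃₀ (B l '' {ψ ∈ Ψ | P (B l ψ)}) := by
    ext x
    constructor
    · exact fun hx ↦ ⟨B l x, ⟨x, hx, rfl⟩, hB.mem_cell hl x hx.1⟩
    · rintro ⟨_, ⟨ψ, ⟨hψ, hPψ⟩, rfl⟩, hx⟩
      have hxΨ : x ∈ Ψ := hB.cell_subset hl ψ hψ hx
      exact ⟨hxΨ, hB.partition hl ψ hψ x hxΨ hx ▸ hPψ⟩
  rw [hunion]
  refine MeasurableSet.sUnion ((hB.countable_cells hl).mono (Set.image_mono fun ψ hψ ↦ hψ.1)) ?_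
  rintro _ ⟨ψ, hψ, rfl⟩
  exact hB.measurable_cell hl ψ hψ.1

theorem measurableSet (hB : IsRegularDiscretization Ψ Pri B) : MeasurableSet Ψ := by
  simpa using hB.measurableSet_sep_cell one_pos fun _ ↦ True

end IsRegularDiscretization

theorem stmt_15_general {k : ℕ} (Ψ : Set (EuclideanSpace ℝ (Fin k)))
    (p q : EuclideanSpace ℝ (Fin k) → ℝ)
    (hpc : Continuous p)
    (hqm : Measurable q)
    (Pri Post : Measure (EuclideanSpace ℝ (Fin k)))
    [IsProbabilityMeasure Post]
    (hPost : Post = (volume.restrict Ψ).withDensity fun x => ENNReal.ofReal (q x))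
    (B : ℝ → EuclideanSpace ℝ (Fin k) → Set (EuclideanSpace ℝ (Fin k)))
    (hB : IsRegularDiscretization Ψ Pri B)
    (hconv : ∀ ψ ∈ Ψ,
      Tendsto (fun l => (Post (B l ψ)).toReal / (Pri (B l ψ)).toReal)
        (𝓝[>] 0) (𝓝 (q ψ / p ψ)))
    (c : ℝ)
    (hnull : Post {ψ ∈ Ψ | q ψ / p ψ = c} = 0)
    (Sc : Set (EuclideanSpace ℝ (Fin k)))
    (hSc : Sc = {ψ ∈ Ψ | c ≤ q ψ / p ψ})
    (Sl : ℝ → Set (EuclideanSpace ℝ (Fin k)))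
    (hSl : ∀ l, Sl l = {ψ ∈ Ψ | c ≤ (Post (B l ψ)).toReal / (Pri (B l ψ)).toReal}) :
    Tendsto (fun l => Post (Sl l ∆ Sc)) (𝓝[>] 0) (𝓝 0) := by
  have hΨ : MeasurableSet Ψ := hB.measurableSet
  have hScm : MeasurableSet Sc :=
    hSc ▸ hΨ.inter (measurableSet_le measurable_const (hqm.div hpc.measurable))
  have hSlm : ∀ᶠ l in 𝓝[>] 0, MeasurableSet (Sl l) := by
    filter_upwards [self_mem_nhdsWithin] with l hl
    exact hSl l ▸ hB.measurableSet_sep_cell hl fun s ↦ c ≤ (Post s).toReal / (Pri s).toReal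
  have hae_mem : ∀ᵐ x ∂Post, x ∈ Ψ :=
    hPost ▸ (withDensity_absolutelyContinuous _ _).ae_le (ae_restrict_mem hΨ)
  have hae_ne : ∀ᵐ x ∂Post, x ∉ {ψ ∈ Ψ | q ψ / p ψ = c} :=
    measure_eq_zero_iff_ae_notMem.mp hnull
  refine tendsto_measure_symmDiff_of_ae_eventually_mem_iff hScm hSlm ?_
  filter_upwards [hae_mem, hae_ne] with x hxΨ hxc
  filter_upwards [(hconv x hxΨ).eventually_const_le_iff_of_ne fun h ↦ hxc ⟨hxΨ, h⟩] with l hl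
  simp only [hSl, hSc, Set.mem_ofPred_eq, hxΨ, true_and, hl]

/-- Under a regular discretization of `Ψ`, with the discretized
relative belief ratios converging pointwise to `q/p`, for any `c > 0` whose level set
`{q/p = c}` is posterior null, the sets `S_{λ,c} = {ψ : Π_post(B_λ ψ)/Π(B_λ ψ) ≥ c}`
converge to `S_c = {ψ : q ψ/p ψ ≥ c}` in posterior measure of the symmetric
difference. -/
theorem stmt_15 {k : ℕ} (Ψ : Set (EuclideanSpace ℝ (Fin k))) (hΨopen : IsOpen Ψ)
    (p q : EuclideanSpace ℝ (Fin k) → ℝ)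
    (hpc : Continuous p) (hppos : ∀ x, 0 < p x)
    (hqm : Measurable q) (hqnn : ∀ x, 0 ≤ q x)
    (Pri Post : Measure (EuclideanSpace ℝ (Fin k)))
    [IsProbabilityMeasure Pri] [IsProbabilityMeasure Post]
    (hPri : Pri = (volume.restrict Ψ).withDensity fun x => ENNReal.ofReal (p x))
    (hPost : Post = (volume.restrict Ψ).withDensity fun x => ENNReal.ofReal (q x))
    (B : ℝ → EuclideanSpace ℝ (Fin k) → Set (EuclideanSpace ℝ (Fin k)))
    (hB : IsRegularDiscretization Ψ Pri B)
    (hconv : ∀ ψ ∈ Ψ,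
      Tendsto (fun l => (Post (B l ψ)).toReal / (Pri (B l ψ)).toReal)
        (𝓝[>] 0) (𝓝 (q ψ / p ψ)))
    (c : ℝ) (hc : 0 < c)
    (hnull : Post {ψ ∈ Ψ | q ψ / p ψ = c} = 0)
    (Sc : Set (EuclideanSpace ℝ (Fin k)))
    (hSc : Sc = {ψ ∈ Ψ | c ≤ q ψ / p ψ})
    (Sl : ℝ → Set (EuclideanSpace ℝ (Fin k)))
    (hSl : ∀ l, Sl l = {ψ ∈ Ψ | c ≤ (Post (B l ψ)).toReal / (Pri (B l ψ)).toReal}) :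
    Tendsto (fun l => Post (Sl l ∆ Sc)) (𝓝[>] 0) (𝓝 0) :=
  stmt_15_general Ψ p q hpc hqm Pri Post hPost B hB hconv c hnull Sc hSc Sl hSl
end

section
/- Let Ψ be an open subset of ℝ^k with ν Lebesgue measure and the prior Π and posterior Π_post probability measures on Ψ with densities p and q with respect to ν, p continuous and strictly positive. Suppose {B_λ(ψ) : ψ ∈ Ψ} is a regular discretization of Ψ for each λ > 0, that Π_post(B_λ(ψ))/Π(B_λ(ψ)) → q(ψ)/p(ψ) as λ → 0 for every ψ, and that the relative belief ratio has a continuous posterior distribution, i.e., Π_post({ψ : q(ψ)/p(ψ) = c}) = 0 for every c ≥ 0. Fix γ ∈ (0, 1). Define S_c = {ψ : q(ψ)/p(ψ) ≥ c}, S_{λ,c} = {ψ : Π_post(B_λ(ψ))/Π(B_λ(ψ)) ≥ c}, the γ-relative surprise region C_γ = S_{c_γ} with c_γ = sup{k ≥ 0 : Π_post(S_k) ≥ γ}, and the undiscretized γ-relative surprise region of the discretized problem C_{λ,γ} = S_{λ,c_{λ,γ}} with c_{λ,γ} = sup{k ≥ 0 : Π_post(S_{λ,k}) ≥ γ}. Then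 Π_post(C_{λ,γ} Δ C_γ) → 0 as λ → 0. -/
/-!
The posterior tail function `G c = Π_post {r ≥ c}` of the relative belief ratio `r = q / p` is
continuous because `r` has no posterior atoms; it equals `1` at `0` and tends to `0`. By the
intermediate value theorem the cutoff `c_γ` lies between levels `c₁ ≤ c₂` with `G c₁` just above
and `G c₂` just below `γ`. Pointwise convergence of the discretized ratios `f_λ → r` gives, by
dominated convergence, `Π_post {f_λ ≥ c} → G c` and `Π_post {|f_λ - r| ≥ η} → 0`. Hence eventually
`c_{λ,γ} ∈ [c₁, c₂]` as well, and off the deviation set `{|f_λ - r| ≥ η}` the two regions differ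
only where `c₁ - η ≤ r < c₂ + η`, whose posterior measure is close to `G c₁ - G c₂`.
-/

open MeasureTheory Filter
open scoped Topology symmDiff

section LevelSets

variable {α ι : Type*} [MeasurableSpace α] {μ : Measure α} {L : Filter ι}

theorem tendsto_measure_of_ae_eventually_mem_iff [IsFiniteMeasure μ] [L.IsCountablyGenerated]
    {A : Set α} {As : ι → Set α} (hA : NullMeasurableSet A μ)
    (hAs : ∀ᶠ i in L, NullMeasurableSet (As i) μ)
    (hlim : ∀ᵐ x ∂μ, ∀ᶠ i in L, x ∈ As i ↔ x ∈ A) :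
    Tendsto (fun i => μ (As i)) L (𝓝 (μ A)) := by
  have hconv := tendsto_lintegral_filter_of_dominated_convergence' (μ := μ) (l := L) 1
    (F := fun i => (As i).indicator 1) (f := A.indicator 1)
    (hAs.mono fun i hi => aemeasurable_one.indicator₀ hi)
    (.of_forall fun i => .of_forall fun x => Set.indicator_le_self' (fun _ _ => zero_le_one) x)
    (by simp)
    (by simpa only [Pi.one_def, tendsto_indicator_const_apply_iff_eventually] using hlim)
  rw [lintegral_indicator_one₀ hA] at hconv
  refine hconv.congr' ?_
  filter_upwards [hAs] with i hi using lintegral_indicator_one₀ hi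

theorem tendsto_measure_setOf_le_of_ae_tendsto [IsFiniteMeasure μ] [L.IsCountablyGenerated]
    {f : ι → α → ℝ} {r : α → ℝ} {t : ι → ℝ} {c : ℝ}
    (hf : ∀ᶠ i in L, AEMeasurable (f i) μ) (hr : Measurable r)
    (hfr : ∀ᵐ x ∂μ, Tendsto (fun i => f i x) L (𝓝 (r x))) (ht : Tendsto t L (𝓝 c))
    (hc : μ {x | r x = c} = 0) :
    Tendsto (fun i => μ {x | t i ≤ f i x}) L (𝓝 (μ {x | c ≤ r x})) := by
  refine tendsto_measure_of_ae_eventually_mem_iff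
    (measurableSet_le measurable_const hr).nullMeasurableSet
    (hf.mono fun i hi => nullMeasurableSet_le aemeasurable_const hi) ?_
  filter_upwards [hfr, measure_eq_zero_iff_ae_notMem.1 hc] with x hx hxc
  have hdiff : Tendsto (fun i => f i x - t i) L (𝓝 (r x - c)) := hx.sub ht
  rcases lt_or_gt_of_ne hxc with hlt | hgt
  · filter_upwards [hdiff.eventually_lt_const (sub_neg.2 hlt)] with i hi
    exact iff_of_false (fun h : t i ≤ f i x => by linarith) (fun h : c ≤ r x => by linarith)
  · filter_upwards [hdiff.eventually_const_lt (sub_pos.2 hgt)] with i hi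
    exact iff_of_true (show t i ≤ f i x by linarith) hgt.le

theorem tendsto_measure_le_abs_sub_of_ae_tendsto [IsFiniteMeasure μ] [L.IsCountablyGenerated]
    {f : ι → α → ℝ} {r : α → ℝ} (hf : ∀ᶠ i in L, AEMeasurable (f i) μ) (hr : Measurable r)
    (hfr : ∀ᵐ x ∂μ, Tendsto (fun i => f i x) L (𝓝 (r x))) {η : ℝ} (hη : 0 < η) :
    Tendsto (fun i => μ {x | η ≤ |f i x - r x|}) L (𝓝 0) := by
  have h := tendsto_measure_setOf_le_of_ae_tendsto (μ := μ) (r := fun _ => (0 : ℝ))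
    (t := fun _ => η) (hf.mono fun i hi => (hi.sub hr.aemeasurable).abs) measurable_const
    (hfr.mono fun x hx => by simpa using (hx.sub_const (r x)).abs) tendsto_const_nhds
    (by simp [hη.ne])
  rwa [show μ {x : α | η ≤ (0 : ℝ)} = 0 by simp [hη.not_ge]] at h

theorem continuous_measureReal_setOf_le [IsFiniteMeasure μ] {r : α → ℝ} (hr : Measurable r)
    (hatom : ∀ c, μ {x | r x = c} = 0) :
    Continuous fun c => μ.real {x | c ≤ r x} :=
  continuous_iff_continuousAt.2 fun c => (ENNReal.tendsto_toReal (measure_ne_top _ _)).comp <|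
    tendsto_measure_setOf_le_of_ae_tendsto (f := fun _ => r) (.of_forall fun _ => hr.aemeasurable)
      hr (ae_of_all _ fun _ => tendsto_const_nhds) tendsto_id (hatom c)

theorem tendsto_measureReal_setOf_le_atTop [IsFiniteMeasure μ] {r : α → ℝ} (hr : Measurable r) :
    Tendsto (fun c => μ.real {x | c ≤ r x}) atTop (𝓝 0) := by
  have h := tendsto_measure_of_ae_eventually_mem_iff (μ := μ) (A := ∅)
    (As := fun c => {x | c ≤ r x}) .empty
    (.of_forall fun c => (measurableSet_le measurable_const hr).nullMeasurableSet)
    (ae_of_all _ fun x =>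
      (eventually_gt_atTop (r x)).mono fun c hc => iff_of_false (not_le.2 hc) id)
  rw [measure_empty] at h
  exact (ENNReal.tendsto_toReal ENNReal.zero_ne_top).comp h

theorem exists_nonneg_measureReal_setOf_le_eq [IsProbabilityMeasure μ] {r : α → ℝ}
    (hr : Measurable r) (hr0 : ∀ x, 0 ≤ r x) (hatom : ∀ c, μ {x | r x = c} = 0)
    {v : ℝ} (hv0 : 0 < v) (hv1 : v ≤ 1) : ∃ c, 0 ≤ c ∧ μ.real {x | c ≤ r x} = v := by
  obtain ⟨N, hN, hN0⟩ := (((tendsto_measureReal_setOf_le_atTop (μ := μ) hr).eventually_lt_const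
    hv0).and (eventually_ge_atTop 0)).exists
  have hzero : μ.real {x | 0 ≤ r x} = 1 := by simp [hr0]
  obtain ⟨c, hc, hcv⟩ := intermediate_value_Icc' hN0
    (continuous_measureReal_setOf_le hr hatom).continuousOn ⟨hN.le, hzero ▸ hv1⟩
  exact ⟨c, hc.1, hcv⟩

end LevelSets

section Cutoff

variable {α : Type*} [MeasurableSpace α] {μ : Measure α}

/-- The paper's `c_γ`; `surpriseRegion μ r γ` is its `C_γ`. -/
noncomputable def surpriseCutoff (μ : Measure α) (r : α → ℝ) (γ : ℝ) : ℝ :=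
  sSup {c : ℝ | 0 ≤ c ∧ γ ≤ μ.real {x | c ≤ r x}}

def surpriseRegion (μ : Measure α) (r : α → ℝ) (γ : ℝ) : Set α :=
  {x | surpriseCutoff μ r γ ≤ r x}

theorem surpriseCutoff_mem_Icc [IsFiniteMeasure μ] {r : α → ℝ} {γ c₁ c₂ : ℝ} (hc₁ : 0 ≤ c₁)
    (h₁ : γ ≤ μ.real {x | c₁ ≤ r x}) (hc₂ : 0 ≤ c₂) (h₂ : μ.real {x | c₂ ≤ r x} < γ) :
    surpriseCutoff μ r γ ∈ Set.Icc c₁ c₂ := by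
  have hub : ∀ c ∈ {c : ℝ | 0 ≤ c ∧ γ ≤ μ.real {x | c ≤ r x}}, c ≤ c₂ := by
    rintro c ⟨-, hc⟩
    by_contra! hlt
    have hsub : {x | c ≤ r x} ⊆ {x | c₂ ≤ r x} := fun x hx => hlt.le.trans hx
    linarith [measureReal_mono (μ := μ) hsub]
  exact ⟨le_csSup ⟨c₂, hub⟩ ⟨hc₁, h₁⟩, Real.sSup_le hub hc₂⟩

theorem exists_surpriseCutoff_bracket [IsProbabilityMeasure μ] {r : α → ℝ} (hr : Measurable r)
    (hr0 : ∀ x, 0 ≤ r x) (hatom : ∀ c, μ {x | r x = c} = 0) {γ ε : ℝ} (hγ : 0 < γ)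
    (hγ1 : γ < 1) (hε : 0 < ε) :
    ∃ c₁ c₂ η, 0 ≤ c₁ ∧ 0 ≤ c₂ ∧ 0 < η ∧ γ < μ.real {x | c₁ ≤ r x} ∧
      μ.real {x | c₂ ≤ r x} < γ ∧ μ.real {x | c₁ - η ≤ r x} - μ.real {x | c₂ + η ≤ r x} < ε := by
  set g : ℝ → ℝ := fun c => μ.real {x | c ≤ r x}
  have hg : Continuous g := continuous_measureReal_setOf_le hr hatom
  obtain ⟨δ, hδ, hδγ, hδ1, hδε⟩ : ∃ δ > 0, δ < γ ∧ δ < 1 - γ ∧ 2 * δ < ε := by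
    refine ⟨min (min γ (1 - γ)) ε / 3, div_pos (lt_min (lt_min hγ (by linarith)) hε) three_pos,
      ?_, ?_, ?_⟩ <;>
    linarith [min_le_left (min γ (1 - γ)) ε, min_le_right (min γ (1 - γ)) ε,
      min_le_left γ (1 - γ), min_le_right γ (1 - γ)]
  obtain ⟨c₁, hc₁, hg₁⟩ :=
    exists_nonneg_measureReal_setOf_le_eq hr hr0 hatom (v := γ + δ) (by linarith) (by linarith)
  obtain ⟨c₂, hc₂, hg₂⟩ :=
    exists_nonneg_measureReal_setOf_le_eq hr hr0 hatom (v := γ - δ) (by linarith) (by linarith)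
  have hlim : Tendsto (fun η => g (c₁ - η) - g (c₂ + η)) (𝓝[>] 0) (𝓝 (g c₁ - g c₂)) := by
    have h : Continuous fun η => g (c₁ - η) - g (c₂ + η) := by fun_prop
    simpa using (h.tendsto 0).mono_left nhdsWithin_le_nhds
  obtain ⟨η, hband, hη⟩ :=
    ((hlim.eventually_lt_const (show g c₁ - g c₂ < ε by simp only [g]; linarith)).and
      self_mem_nhdsWithin).exists
  exact ⟨c₁, c₂, η, hc₁, hc₂, hη, by linarith, by linarith, hband⟩

end Cutoff

theorem symmDiff_setOf_le_subset {α : Type*} {f r : α → ℝ} {s t c₁ c₂ : ℝ} (η : ℝ)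
    (hs : s ∈ Set.Icc c₁ c₂) (ht : t ∈ Set.Icc c₁ c₂) :
    {x | s ≤ f x} ∆ {x | t ≤ r x} ⊆
      {x | η ≤ |f x - r x|} ∪ ({x | c₁ - η ≤ r x} \ {x | c₂ + η ≤ r x}) := by
  intro x hx
  by_cases hη : η ≤ |f x - r x|
  · exact Or.inl hη
  obtain ⟨hlo, hhi⟩ := abs_lt.1 (not_le.1 hη)
  refine Or.inr ?_
  rcases Set.mem_symmDiff.1 hx with ⟨hf, hr⟩ | ⟨hr, hf⟩
  · have hf : s ≤ f x := hf
    have hr : ¬ t ≤ r x := hr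
    exact ⟨show c₁ - η ≤ r x by linarith [hs.1], fun h : c₂ + η ≤ r x => by linarith [ht.2]⟩
  · have hr : t ≤ r x := hr
    have hf : ¬ s ≤ f x := hf
    exact ⟨show c₁ - η ≤ r x by linarith [ht.1], fun h : c₂ + η ≤ r x => by linarith [hs.2]⟩

theorem tendsto_measure_symmDiff_surpriseRegion {α ι : Type*} [MeasurableSpace α]
    {μ : Measure α} [IsProbabilityMeasure μ] {L : Filter ι} [L.IsCountablyGenerated]
    {f : ι → α → ℝ} {r : α → ℝ} (hf : ∀ᶠ i in L, AEMeasurable (f i) μ) (hr : Measurable r)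
    (hr0 : ∀ x, 0 ≤ r x) (hatom : ∀ c, μ {x | r x = c} = 0)
    (hfr : ∀ᵐ x ∂μ, Tendsto (fun i => f i x) L (𝓝 (r x))) {γ : ℝ} (hγ : 0 < γ) (hγ1 : γ < 1) :
    Tendsto (fun i => μ (surpriseRegion μ (f i) γ ∆ surpriseRegion μ r γ)) L (𝓝 0) := by
  rw [← ENNReal.tendsto_toReal_iff (fun _ => measure_ne_top _ _) ENNReal.zero_ne_top,
    ENNReal.toReal_zero]
  refine tendsto_order.2 ⟨fun a ha => .of_forall fun i => ha.trans_le ENNReal.toReal_nonneg,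
    fun ε hε => ?_⟩
  obtain ⟨c₁, c₂, η, hc₁, hc₂, hη, hg₁, hg₂, hband⟩ :=
    exists_surpriseCutoff_bracket hr hr0 hatom hγ hγ1 (half_pos hε)
  have hcut : surpriseCutoff μ r γ ∈ Set.Icc c₁ c₂ := surpriseCutoff_mem_Icc hc₁ hg₁.le hc₂ hg₂
  have hlevel (c : ℝ) : Tendsto (fun i => μ.real {x | c ≤ f i x}) L (𝓝 (μ.real {x | c ≤ r x})) :=
    (ENNReal.tendsto_toReal (measure_ne_top _ _)).comp
      (tendsto_measure_setOf_le_of_ae_tendsto hf hr hfr tendsto_const_nhds (hatom c))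
  filter_upwards [(hlevel c₁).eventually_const_lt hg₁, (hlevel c₂).eventually_lt_const hg₂,
    ((ENNReal.tendsto_toReal ENNReal.zero_ne_top).comp
      (tendsto_measure_le_abs_sub_of_ae_tendsto hf hr hfr hη)).eventually_lt_const (half_pos hε)]
    with i h₁ h₂ h₃
  have hsub : {x | c₂ + η ≤ r x} ⊆ {x | c₁ - η ≤ r x} := fun x (hx : c₂ + η ≤ r x) =>
    show c₁ - η ≤ r x by linarith [hcut.1, hcut.2]
  calc μ.real (surpriseRegion μ (f i) γ ∆ surpriseRegion μ r γ)
      ≤ μ.real ({x | η ≤ |f i x - r x|} ∪ ({x | c₁ - η ≤ r x} \ {x | c₂ + η ≤ r x})) :=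
        measureReal_mono (symmDiff_setOf_le_subset η (surpriseCutoff_mem_Icc hc₁ h₁.le hc₂ h₂) hcut)
    _ ≤ μ.real {x | η ≤ |f i x - r x|} + μ.real ({x | c₁ - η ≤ r x} \ {x | c₂ + η ≤ r x}) :=
        measureReal_union_le _ _
    _ < ε / 2 + ε / 2 := by
        rw [measureReal_sdiff hsub (measurableSet_le measurable_const hr)]
        exact add_lt_add h₃ hband
    _ = ε := add_halves ε

theorem IsRegularDiscretization.measurable_comp_cell {E β : Type*} [MeasurableSpace E]
    [PseudoMetricSpace E] [MeasurableSpace β] {Ψ : Set E} {Pri : Measure E} {B : ℝ → E → Set E}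
    (hB : IsRegularDiscretization Ψ Pri B) {l : ℝ} (hl : 0 < l) (F : Set E → β) :
    Measurable fun ψ : Ψ => F (B l ψ) := by
  intro t _
  have hcells : (B l '' {ψ ∈ Ψ | F (B l ψ) ∈ t}).Countable :=
    (hB.countable_cells hl).mono (Set.image_mono fun ψ hψ => hψ.1)
  have hunion : MeasurableSet (⋃₀ (B l '' {ψ ∈ Ψ | F (B l ψ) ∈ t})) :=
    .sUnion hcells (by rintro _ ⟨ψ, hψ, rfl⟩; exact hB.measurable_cell hl ψ hψ.1)
  convert measurable_subtype_coe hunion using 1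
  ext ⟨x, hx⟩
  simp only [Set.mem_preimage, Set.mem_sUnion, Set.mem_image]
  constructor
  · exact fun h => ⟨B l x, ⟨x, ⟨hx, h⟩, rfl⟩, hB.mem_cell hl x hx⟩
  · rintro ⟨_, ⟨ψ, hψ, rfl⟩, hxψ⟩
    show F (B l x) ∈ t
    rw [hB.partition hl ψ hψ.1 x hx hxψ]
    exact hψ.2

theorem stmt_16_general {k : ℕ} (Ψ : Set (EuclideanSpace ℝ (Fin k))) (hΨopen : IsOpen Ψ)
    (p q : EuclideanSpace ℝ (Fin k) → ℝ)
    (hpc : Continuous p) (hppos : ∀ x, 0 < p x)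
    (hqm : Measurable q) (hqnn : ∀ x, 0 ≤ q x)
    (Pri Post : Measure (EuclideanSpace ℝ (Fin k)))
    [IsProbabilityMeasure Post]
    (hPost : Post = (volume.restrict Ψ).withDensity fun x => ENNReal.ofReal (q x))
    (B : ℝ → EuclideanSpace ℝ (Fin k) → Set (EuclideanSpace ℝ (Fin k)))
    (hB : IsRegularDiscretization Ψ Pri B)
    (hconv : ∀ ψ ∈ Ψ,
      Tendsto (fun l => (Post (B l ψ)).toReal / (Pri (B l ψ)).toReal)
        (𝓝[>] 0) (𝓝 (q ψ / p ψ)))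
    (hcontdist : ∀ c : ℝ, 0 ≤ c → Post {ψ ∈ Ψ | q ψ / p ψ = c} = 0)
    (γ : ℝ) (hγ : 0 < γ) (hγ1 : γ < 1)
    (S : ℝ → Set (EuclideanSpace ℝ (Fin k)))
    (hS : ∀ c, S c = {ψ ∈ Ψ | c ≤ q ψ / p ψ})
    (Sl : ℝ → ℝ → Set (EuclideanSpace ℝ (Fin k)))
    (hSl : ∀ l c, Sl l c = {ψ ∈ Ψ | c ≤ (Post (B l ψ)).toReal / (Pri (B l ψ)).toReal})
    (cγ : ℝ) (hcγ : cγ = sSup {c : ℝ | 0 ≤ c ∧ γ ≤ (Post (S c)).toReal})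
    (Cγ : Set (EuclideanSpace ℝ (Fin k))) (hCγ : Cγ = S cγ)
    (cl : ℝ → ℝ) (hcl : ∀ l, cl l = sSup {c : ℝ | 0 ≤ c ∧ γ ≤ (Post (Sl l c)).toReal})
    (Cl : ℝ → Set (EuclideanSpace ℝ (Fin k))) (hCl : ∀ l, Cl l = Sl l (cl l)) :
    Tendsto (fun l => Post (Cl l ∆ Cγ)) (𝓝[>] 0) (𝓝 0) := by
  set r := fun ψ => q ψ / p ψ
  set f := fun l ψ => (Post (B l ψ)).toReal / (Pri (B l ψ)).toReal
  have hΨ : ∀ᵐ x ∂Post, x ∈ Ψ := hPost ▸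
    (withDensity_absolutelyContinuous _ _).ae_le (ae_restrict_mem hΨopen.measurableSet)
  have hsep (P : EuclideanSpace ℝ (Fin k) → Prop) : Post {ψ ∈ Ψ | P ψ} = Post {ψ | P ψ} :=
    Measure.measure_inter_eq_of_ae hΨ
  have hr0 (x : EuclideanSpace ℝ (Fin k)) : 0 ≤ r x := div_nonneg (hqnn x) (hppos x).le
  have hatom (c : ℝ) : Post {x | r x = c} = 0 := by
    rcases le_or_gt 0 c with hc | hc
    · rw [← hsep]
      exact hcontdist c hc
    · convert measure_empty (μ := Post)
      exact Set.eq_empty_of_forall_notMem fun x (hx : r x = c) => (hr0 x).not_gt (hx ▸ hc)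
  have hf : ∀ᶠ l in 𝓝[>] 0, AEMeasurable (f l) Post := by
    filter_upwards [self_mem_nhdsWithin] with l hl
    rw [← Measure.restrict_eq_self_of_ae_mem hΨ]
    exact aemeasurable_restrict_of_measurable_subtype hΨopen.measurableSet
      (hB.measurable_comp_cell hl fun s => (Post s).toReal / (Pri s).toReal)
  have hCl' (l : ℝ) : Cl l = Ψ ∩ surpriseRegion Post (f l) γ := by
    simp only [hCl, hcl, hSl, hsep]
    rfl
  have hCγ' : Cγ = Ψ ∩ surpriseRegion Post r γ := by
    simp only [hCγ, hcγ, hS, hsep]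
    rfl
  refine (tendsto_measure_symmDiff_surpriseRegion (r := r) hf (hqm.div hpc.measurable) hr0 hatom
    (hΨ.mono hconv) hγ hγ1).congr fun l => ?_
  rw [hCl', hCγ', ← Set.inter_symmDiff_distrib_left, Measure.measure_inter_eq_of_ae hΨ]

/-- **Theorem 10.** Under a regular discretization of `Ψ`, with the
discretized relative belief ratios converging pointwise to `q/p` and the relative
belief ratio having a continuous posterior distribution, the undiscretized
`γ`-relative surprise regions `C_{λ,γ}` of the discretized problems converge to the
`γ`-relative surprise region `C_γ` in posterior measure of the symmetric
difference. -/
theorem stmt_16 {k : ℕ} (Ψ : Set (EuclideanSpace ℝ (Fin k))) (hΨopen : IsOpen Ψ)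
    (p q : EuclideanSpace ℝ (Fin k) → ℝ)
    (hpc : Continuous p) (hppos : ∀ x, 0 < p x)
    (hqm : Measurable q) (hqnn : ∀ x, 0 ≤ q x)
    (Pri Post : Measure (EuclideanSpace ℝ (Fin k)))
    [IsProbabilityMeasure Pri] [IsProbabilityMeasure Post]
    (hPri : Pri = (volume.restrict Ψ).withDensity fun x => ENNReal.ofReal (p x))
    (hPost : Post = (volume.restrict Ψ).withDensity fun x => ENNReal.ofReal (q x))
    (B : ℝ → EuclideanSpace ℝ (Fin k) → Set (EuclideanSpace ℝ (Fin k)))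
    (hB : IsRegularDiscretization Ψ Pri B)
    (hconv : ∀ ψ ∈ Ψ,
      Tendsto (fun l => (Post (B l ψ)).toReal / (Pri (B l ψ)).toReal)
        (𝓝[>] 0) (𝓝 (q ψ / p ψ)))
    (hcontdist : ∀ c : ℝ, 0 ≤ c → Post {ψ ∈ Ψ | q ψ / p ψ = c} = 0)
    (γ : ℝ) (hγ : 0 < γ) (hγ1 : γ < 1)
    (S : ℝ → Set (EuclideanSpace ℝ (Fin k)))
    (hS : ∀ c, S c = {ψ ∈ Ψ | c ≤ q ψ / p ψ})
    (Sl : ℝ → ℝ → Set (EuclideanSpace ℝ (Fin k)))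
    (hSl : ∀ l c, Sl l c = {ψ ∈ Ψ | c ≤ (Post (B l ψ)).toReal / (Pri (B l ψ)).toReal})
    (cγ : ℝ) (hcγ : cγ = sSup {c : ℝ | 0 ≤ c ∧ γ ≤ (Post (S c)).toReal})
    (Cγ : Set (EuclideanSpace ℝ (Fin k))) (hCγ : Cγ = S cγ)
    (cl : ℝ → ℝ) (hcl : ∀ l, cl l = sSup {c : ℝ | 0 ≤ c ∧ γ ≤ (Post (Sl l c)).toReal})
    (Cl : ℝ → Set (EuclideanSpace ℝ (Fin k))) (hCl : ∀ l, Cl l = Sl l (cl l)) :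
    Tendsto (fun l => Post (Cl l ∆ Cγ)) (𝓝[>] 0) (𝓝 0) :=
  stmt_16_general Ψ hΨopen p q hpc hppos hqm hqnn Pri Post hPost B hB hconv hcontdist γ hγ hγ1 S hS
    Sl hSl cγ hcγ Cγ hCγ cl hcl Cl hCl
end

section
/- Let Ψ be an open subset of ℝ^k with ν Lebesgue measure and the prior Π and posterior Π_post probability measures on Ψ with densities p and q with respect to ν, p continuous and strictly positive. Suppose {B_λ(ψ) : ψ ∈ Ψ} is a regular discretization of Ψ for each λ > 0, that Π_post(B_λ(ψ))/Π(B_λ(ψ)) → q(ψ)/p(ψ) as λ → 0 for every ψ, and that Π_post({ψ : q(ψ)/p(ψ) = c}) = 0 for every c ≥ 0. Fix γ ∈ (0, 1) and let C_γ be the γ-relative surprise region. For η, λ > 0 define R_{η,λ}(ψ) = Π_post(B_λ(ψ))/max(η, Π(B_λ(ψ))), l_{η,λ,γ} = sup{k : Π_post({ψ : R_{η,λ}(ψ) ≥ k}) ≥ γ}, and the undiscretized lowest posterior loss region L_{η,λ,γ} = {ψ : R_{η,λ}(ψ) ≥ l_{η,λ,γ}}. Then Π_post((liminf_{η → 0}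 L_{η,λ,γ}) Δ C_γ) → 0 and Π_post((limsup_{η → 0} L_{η,λ,γ}) Δ C_γ) → 0 as λ → 0, where liminf_{η → 0} L_{η,λ,γ} = {ψ : ∃η₀ > 0, ∀η ∈ (0, η₀), ψ ∈ L_{η,λ,γ}} and limsup_{η → 0} L_{η,λ,γ} = {ψ : ∀η₀ > 0, ∃η ∈ (0, η₀), ψ ∈ L_{η,λ,γ}}. -/
/-!
For fixed `λ`, the truncated ratios `R_{η,λ} = Π_post(B_λ) / max(η, Π(B_λ))` increase as `η ↓ 0`
and agree with the cell ratio `f_λ = Π_post(B_λ) / Π(B_λ)` on a cell once `η` is below the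
cell's prior mass. Hence the thresholds `l_{η,λ,γ}` increase to `t_λ = sup_η l_{η,λ,γ}`, both
the `liminf` and the `limsup` of `L_{η,λ,γ}` equal the superlevel set `{f_λ ≥ t_λ}`, and `t_λ`
is a `γ`-quantile of `f_λ` under the posterior.

As `λ → 0`, `f_λ → q/p` pointwise, hence in posterior measure. Since `q/p` has no posterior
atoms, `C_γ` has posterior mass exactly `γ` and thin slabs `{|q/p - b| ≤ δ}` have small mass.
Superlevel sets of `f_λ` and of `q/p` differ only on such a slab and on `{|f_λ - q/p| ≥ β}`,
which pins `t_λ` down well enough to force `Π_post({f_λ ≥ t_λ} ∆ C_γ) → 0`.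
-/

open MeasureTheory Filter Set
open scoped Topology symmDiff

section Superlevel

variable {α : Type*} [MeasurableSpace α] {μ : Measure α} [IsFiniteMeasure μ]

lemma measureReal_setOf_le_anti (g : α → ℝ) {a b : ℝ} (hab : a ≤ b) :
    μ.real {x | b ≤ g x} ≤ μ.real {x | a ≤ g x} :=
  measureReal_mono fun _ hx => hab.trans hx

lemma measureReal_setOf_le_le_of_ae_le {h h' : α → ℝ} (hh : h ≤ᵐ[μ] h') (c : ℝ) :
    μ.real {x | c ≤ h x} ≤ μ.real {x | c ≤ h' x} :=
  ENNReal.toReal_mono (measure_ne_top _ _)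
    (measure_mono_ae (hh.mono fun _ hx (hc : c ≤ _) => hc.trans hx))

lemma measureReal_setOf_le_le_add_dist (f g : α → ℝ) (c β : ℝ) :
    μ.real {x | c ≤ f x} ≤
      μ.real {x | c - β ≤ g x} + μ.real {x | β ≤ dist (f x) (g x)} := by
  refine (measureReal_mono fun x (hx : c ≤ f x) => ?_).trans (measureReal_union_le _ _)
  rcases le_or_gt β (dist (f x) (g x)) with h | h
  · exact Or.inr h
  · rw [Real.dist_eq, abs_lt] at h
    exact Or.inl (show c - β ≤ g x by linarith)

lemma measureReal_setOf_le_le_add_preimage_Icc (g : α → ℝ) {a a' b δ : ℝ}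
    (ha : b - δ ≤ a) (ha' : a' ≤ b + δ) :
    μ.real {x | a ≤ g x} ≤ μ.real {x | a' ≤ g x} + μ.real (g ⁻¹' Icc (b - δ) (b + δ)) := by
  refine (measureReal_mono fun x (hx : a ≤ g x) => ?_).trans (measureReal_union_le _ _)
  rcases le_or_gt a' (g x) with h | h
  · exact Or.inl h
  · exact Or.inr ⟨ha.trans hx, by linarith⟩

lemma tendsto_measureReal_preimage_Icc {g : α → ℝ} (hg : Measurable g) {b : ℝ}
    (hb : μ (g ⁻¹' {b}) = 0) :
    Tendsto (fun δ => μ.real (g ⁻¹' Icc (b - δ) (b + δ))) (𝓝[>] 0) (𝓝 0) := by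
  have h := tendsto_measure_Icc_nhdsWithin_right' (μ.map g) b
  simp only [Measure.map_apply hg measurableSet_Icc,
    Measure.map_apply hg (measurableSet_singleton b), hb] at h
  simpa [measureReal_def, Function.comp_def] using
    (ENNReal.tendsto_toReal ENNReal.zero_ne_top).comp h

lemma exists_pos_measureReal_preimage_Icc_lt {g : α → ℝ} (hg : Measurable g) {b : ℝ}
    (hb : μ (g ⁻¹' {b}) = 0) {ε : ℝ} (hε : 0 < ε) :
    ∃ δ > 0, μ.real (g ⁻¹' Icc (b - δ) (b + δ)) < ε :=
  (((tendsto_measureReal_preimage_Icc hg hb).eventually (gt_mem_nhds hε)).and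
    self_mem_nhdsWithin).exists.imp fun _ h => ⟨h.2, h.1⟩

lemma measureReal_setOf_le_eq_of_forall {g : α → ℝ} (hg : Measurable g) {b γ : ℝ}
    (hb : μ (g ⁻¹' {b}) = 0) (hlt : ∀ c < b, γ ≤ μ.real {x | c ≤ g x})
    (hgt : ∀ c, b < c → μ.real {x | c ≤ g x} ≤ γ) : μ.real {x | b ≤ g x} = γ := by
  have hslab := tendsto_measureReal_preimage_Icc hg hb
  apply le_antisymm
  · refine ge_of_tendsto (by simpa using hslab.const_add γ) ?_
    filter_upwards [self_mem_nhdsWithin] with δ (hδ : 0 < δ)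
    have := measureReal_setOf_le_le_add_preimage_Icc (μ := μ) g
      (a' := b + δ) (by linarith : b - δ ≤ b) le_rfl
    linarith [hgt (b + δ) (by linarith)]
  · refine ge_of_tendsto (by simpa using hslab.const_add (μ.real {x | b ≤ g x})) ?_
    filter_upwards [self_mem_nhdsWithin] with δ (hδ : 0 < δ)
    have := measureReal_setOf_le_le_add_preimage_Icc (μ := μ) g
      (a := b - δ) (a' := b) le_rfl (by linarith : b ≤ b + δ)
    linarith [hlt (b - δ) (by linarith)]

lemma exists_measureReal_setOf_le_lt {f : α → ℝ} (hf : AEMeasurable f μ) {γ : ℝ}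
    (hγ : 0 < γ) : ∃ a, μ.real {x | a ≤ f x} < γ := by
  have h := tendsto_measure_iInter_atTop (μ := μ.map f) (s := Ici)
    (fun _ => measurableSet_Ici.nullMeasurableSet) (fun _ _ h => Ici_subset_Ici.2 h)
    ⟨0, measure_ne_top _ _⟩
  rw [iInter_eq_empty_iff.2 fun x => ⟨x + 1, by simp⟩, measure_empty] at h
  obtain ⟨a, ha⟩ :=
    (((ENNReal.tendsto_toReal ENNReal.zero_ne_top).comp h).eventually (gt_mem_nhds hγ)).exists
  rw [Function.comp_apply, Function.comp_apply,
    Measure.map_apply_of_aemeasurable hf measurableSet_Ici] at ha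
  exact ⟨a, ha⟩

lemma exists_lt_measureReal_setOf_le {g : α → ℝ} (hg : AEMeasurable g μ) {γ : ℝ}
    (hγ : γ < μ.real univ) : ∃ a, γ < μ.real {x | a ≤ g x} := by
  have h := (ENNReal.tendsto_toReal (measure_ne_top _ _)).comp
    (tendsto_measure_Ici_atBot (μ.map g))
  rw [Measure.map_apply_of_aemeasurable hg MeasurableSet.univ, preimage_univ] at h
  obtain ⟨a, ha⟩ := (h.eventually (lt_mem_nhds hγ)).exists
  rw [Function.comp_apply, Measure.map_apply_of_aemeasurable hg measurableSet_Ici] at ha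
  exact ⟨a, ha⟩

lemma bddAbove_setOf_le_measureReal_setOf_le {h : α → ℝ} {γ b : ℝ}
    (hb : μ.real {x | b ≤ h x} < γ) : BddAbove {c | γ ≤ μ.real {x | c ≤ h x}} :=
  ⟨b, fun _ (hc : γ ≤ _) => not_lt.1 fun hbc =>
    (hc.trans (measureReal_setOf_le_anti h hbc.le)).not_gt hb⟩

lemma measureReal_setOf_csSup_le_eq {g : α → ℝ} (hg : Measurable g)
    (hatom : ∀ b, μ (g ⁻¹' {b}) = 0) {γ : ℝ} (hγ : 0 < γ) (h0 : γ ≤ μ.real {x | 0 ≤ g x}) :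
    μ.real {x | sSup {c | 0 ≤ c ∧ γ ≤ μ.real {x | c ≤ g x}} ≤ g x} = γ ∧
      ∀ c', sSup {c | 0 ≤ c ∧ γ ≤ μ.real {x | c ≤ g x}} < c' → μ.real {x | c' ≤ g x} < γ := by
  set S := {c | 0 ≤ c ∧ γ ≤ μ.real {x | c ≤ g x}}
  have hS0 : (0 : ℝ) ∈ S := ⟨le_rfl, h0⟩
  obtain ⟨b, hb⟩ := exists_measureReal_setOf_le_lt (μ := μ) hg.aemeasurable hγ
  have hSb : BddAbove S :=
    (bddAbove_setOf_le_measureReal_setOf_le (μ := μ) hb).mono fun _ hc => hc.2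
  have hgt : ∀ c', sSup S < c' → μ.real {x | c' ≤ g x} < γ := fun c' hc' =>
    not_le.1 fun h => (le_csSup hSb ⟨(le_csSup hSb hS0).trans hc'.le, h⟩).not_gt hc'
  refine ⟨measureReal_setOf_le_eq_of_forall hg (hatom _) (fun _ hc => ?_)
    (fun c hc => (hgt c hc).le), hgt⟩
  obtain ⟨s, hs, hcs⟩ := exists_lt_of_lt_csSup ⟨0, hS0⟩ hc
  exact hs.2.trans (measureReal_setOf_le_anti g hcs.le)

lemma measureReal_symmDiff_le_of_measurableSet {C : Set α} (hC : MeasurableSet C) (D : Set α) :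
    μ.real (D ∆ C) ≤ μ.real D - μ.real C + 2 * μ.real (C \ D) := by
  have hD := measureReal_inter_add_sdiff (μ := μ) (s := D) hC
  have hC' : μ.real C ≤ μ.real (D ∩ C) + μ.real (C \ D) := by
    rw [inter_comm]
    exact (measureReal_mono (inter_union_sdiff C D).symm.subset).trans
      (measureReal_union_le _ _)
  have hDC : μ.real (D ∆ C) ≤ μ.real (D \ C) + μ.real (C \ D) := measureReal_union_le _ _
  linarith

end Superlevel

lemma tendstoInMeasure_of_tendsto_ae_of_isCountablyGenerated {α ι E : Type*}
    [MeasurableSpace α] {μ : Measure α} [IsFiniteMeasure μ] [MetricSpace E]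
    {l : Filter ι} [l.IsCountablyGenerated] {f : ι → α → E} {g : α → E}
    (hf : ∀ᶠ i in l, AEStronglyMeasurable (f i) μ)
    (hfg : ∀ᵐ x ∂μ, Tendsto (fun i => f i x) l (𝓝 (g x))) : TendstoInMeasure μ f l g := by
  intro ε hε
  refine tendsto_iff_seq_tendsto.2 fun u hu => ?_
  obtain ⟨N, hN⟩ := eventually_atTop.1 (hu.eventually hf)
  have hu' := (tendsto_add_atTop_iff_nat N).2 hu
  refine (tendsto_add_atTop_iff_nat N).1 ?_
  exact tendstoInMeasure_of_tendsto_ae (f := fun n => f (u (n + N)))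
    (fun n => hN _ (Nat.le_add_left N n)) (hfg.mono fun x hx => hx.comp hu') ε hε

section Convergence

variable {α ι : Type*} [MeasurableSpace α] {μ : Measure α} [IsFiniteMeasure μ]
  {l : Filter ι} {f : ι → α → ℝ} {g : α → ℝ} {t : ι → ℝ} {γ c : ℝ}

lemma eventually_le_add_of_measureReal_lt (hfg : TendstoInMeasure μ f l g)
    (ht : ∀ᶠ i in l, ∀ c < t i, γ ≤ μ.real {x | c ≤ f i x}) {a β : ℝ}
    (ha : μ.real {x | a ≤ g x} < γ) (hβ : 0 < β) : ∀ᶠ i in l, t i ≤ a + β := by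
  filter_upwards [ht, (tendstoInMeasure_iff_measureReal_dist.1 hfg β hβ).eventually
    (gt_mem_nhds (sub_pos.2 ha))] with i hti hi
  by_contra! h
  have := measureReal_setOf_le_le_add_dist (μ := μ) (f i) g (a + β) β
  rw [add_sub_cancel_right] at this
  linarith [hti _ h]

lemma eventually_sub_le_of_lt_measureReal (hfg : TendstoInMeasure μ f l g)
    (ht : ∀ᶠ i in l, ∀ c, γ < μ.real {x | c ≤ f i x} → c ≤ t i) {a β : ℝ}
    (ha : γ < μ.real {x | a ≤ g x}) (hβ : 0 < β) : ∀ᶠ i in l, a - β ≤ t i := by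
  filter_upwards [ht, (tendstoInMeasure_iff_measureReal_dist.1 hfg β hβ).eventually
    (gt_mem_nhds (sub_pos.2 ha))] with i hti hi
  refine hti _ ?_
  have := measureReal_setOf_le_le_add_dist (μ := μ) g (f i) a β
  simp only [dist_comm (g _)] at this
  linarith

lemma eventually_measureReal_setOf_le_sdiff_lt (hfg : TendstoInMeasure μ f l g)
    (hg : Measurable g) (hc : μ (g ⁻¹' {c}) = 0)
    (hc_gt : ∀ c', c < c' → μ.real {x | c' ≤ g x} < γ)
    (ht : ∀ᶠ i in l, ∀ c' < t i, γ ≤ μ.real {x | c' ≤ f i x}) {δ : ℝ} (hδ : 0 < δ) :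
    ∀ᶠ i in l, μ.real ({x | c ≤ g x} \ {x | t i ≤ f i x}) < 2 * δ := by
  obtain ⟨ρ, hρ, hslab⟩ := exists_pos_measureReal_preimage_Icc_lt hg hc hδ
  filter_upwards [eventually_le_add_of_measureReal_lt hfg ht (hc_gt _ (by linarith : c < c + ρ / 4))
      (by linarith : 0 < ρ / 4),
    (tendstoInMeasure_iff_measureReal_dist.1 hfg _ (half_pos hρ)).eventually
      (gt_mem_nhds hδ)] with i hti hi
  have hsub : {x | c ≤ g x} \ {x | t i ≤ f i x} ⊆
      g ⁻¹' Icc (c - ρ) (c + ρ) ∪ {x | ρ / 2 ≤ dist (f i x) (g x)} := by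
    rintro x ⟨hcx : c ≤ g x, hfx : ¬ t i ≤ f i x⟩
    rcases le_or_gt (ρ / 2) (dist (f i x) (g x)) with h | h
    · exact Or.inr h
    · rw [Real.dist_eq, abs_lt] at h
      exact Or.inl ⟨by linarith, by linarith⟩
  linarith [(measureReal_mono hsub).trans (measureReal_union_le (μ := μ) _ _)]

lemma eventually_measureReal_setOf_le_le (hfg : TendstoInMeasure μ f l g)
    (hg : Measurable g) (hatom : ∀ b, μ (g ⁻¹' {b}) = 0)
    (hc_gt : ∀ c', c < c' → μ.real {x | c' ≤ g x} < γ)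
    (ht : ∀ᶠ i in l, ∀ c', γ < μ.real {x | c' ≤ f i x} → c' ≤ t i) {δ : ℝ} (hδ : 0 < δ)
    (hγδ : γ + δ < μ.real univ) :
    ∀ᶠ i in l, μ.real {x | t i ≤ f i x} ≤ γ + 3 * δ := by
  -- `t i` need not approach `c`: `g` may carry no mass just below `c`. It does eventually
  -- exceed the point `w` where the tail of `g` drops to `γ + δ`.
  set S := {a | γ + δ < μ.real {x | a ≤ g x}}
  have hS : S.Nonempty := exists_lt_measureReal_setOf_le hg.aemeasurable hγδ
  have hSc : BddAbove S := ⟨c, fun a (ha : γ + δ < _) => by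
    by_contra! h
    linarith [hc_gt a h]⟩
  set w := sSup S
  have hw_lt : ∀ a < w, γ + δ < μ.real {x | a ≤ g x} := fun a ha => by
    obtain ⟨s, hs, has⟩ := exists_lt_of_lt_csSup hS ha
    exact hs.trans_le (measureReal_setOf_le_anti g has.le)
  have hw_gt : ∀ a, w < a → μ.real {x | a ≤ g x} ≤ γ + δ := fun a ha =>
    not_lt.1 fun h => (le_csSup hSc h).not_gt ha
  obtain ⟨β, hβ, hslab⟩ := exists_pos_measureReal_preimage_Icc_lt hg (hatom w) hδ
  filter_upwards [eventually_sub_le_of_lt_measureReal hfg ht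
      ((lt_add_of_pos_right γ hδ).trans (hw_lt (w - β / 4) (by linarith)))
      (by linarith : 0 < β / 4),
    (tendstoInMeasure_iff_measureReal_dist.1 hfg _ (half_pos hβ)).eventually
      (gt_mem_nhds hδ)] with i hti hi
  calc μ.real {x | t i ≤ f i x}
      ≤ μ.real {x | t i - β / 2 ≤ g x} + μ.real {x | β / 2 ≤ dist (f i x) (g x)} :=
        measureReal_setOf_le_le_add_dist _ _ _ _
    _ ≤ μ.real {x | w - β ≤ g x} + δ :=
        add_le_add (measureReal_setOf_le_anti g (by linarith)) hi.le
    _ ≤ μ.real {x | w + β ≤ g x} + μ.real (g ⁻¹' Icc (w - β) (w + β)) + δ := by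
        linarith [measureReal_setOf_le_le_add_preimage_Icc (μ := μ) g
          (a := w - β) (a' := w + β) le_rfl le_rfl]
    _ ≤ γ + 3 * δ := by linarith [hw_gt (w + β) (by linarith)]

theorem tendsto_measure_setOf_le_symmDiff_of_tendstoInMeasure (hfg : TendstoInMeasure μ f l g)
    (hg : Measurable g) (hatom : ∀ b, μ (g ⁻¹' {b}) = 0) (hγ : γ < μ.real univ)
    (hc : μ.real {x | c ≤ g x} = γ) (hc_gt : ∀ c', c < c' → μ.real {x | c' ≤ g x} < γ)
    (ht_lt : ∀ᶠ i in l, ∀ c' < t i, γ ≤ μ.real {x | c' ≤ f i x})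
    (ht_gt : ∀ᶠ i in l, ∀ c', γ < μ.real {x | c' ≤ f i x} → c' ≤ t i) :
    Tendsto (fun i => μ ({x | t i ≤ f i x} ∆ {x | c ≤ g x})) l (𝓝 0) := by
  rw [← ENNReal.tendsto_toReal_zero_iff]
  refine tendsto_order.2
    ⟨fun a ha => Eventually.of_forall fun i => ha.trans_le measureReal_nonneg, fun ε hε => ?_⟩
  set δ := min (ε / 8) ((μ.real univ - γ) / 2)
  have hδ : 0 < δ := lt_min (by linarith) (by linarith)
  have hδε : δ ≤ ε / 8 := min_le_left _ _
  have hγδ : γ + δ < μ.real univ := by linarith [min_le_right (ε / 8) ((μ.real univ - γ) / 2)]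
  filter_upwards [eventually_measureReal_setOf_le_sdiff_lt hfg hg (hatom c) hc_gt ht_lt hδ,
    eventually_measureReal_setOf_le_le hfg hg hatom hc_gt ht_gt hδ hγδ] with i hdiff hD
  have := measureReal_symmDiff_le_of_measurableSet (μ := μ) (C := {x | c ≤ g x})
    (hg measurableSet_Ici) {x | t i ≤ f i x}
  change μ.real _ < ε
  linarith

end Convergence

lemma div_max_le_div {α : Type*} {N a : α → ℝ} (hN : ∀ x, 0 ≤ N x) {x : α} (hx : 0 < a x)
    (η : ℝ) : N x / max η (a x) ≤ N x / a x :=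
  div_le_div_of_nonneg_left (hN x) hx (le_max_right _ _)

lemma div_max_anti {α : Type*} {N a : α → ℝ} (hN : ∀ x, 0 ≤ N x) {η η' : ℝ}
    (hη : 0 < η) (hηη' : η ≤ η') (x : α) : N x / max η' (a x) ≤ N x / max η (a x) :=
  div_le_div_of_nonneg_left (hN x) (lt_max_of_lt_left hη) (max_le_max hηη' le_rfl)

lemma le_measureReal_setOf_nonneg_le_div_max {α : Type*} [MeasurableSpace α] {μ : Measure α}
    {N a : α → ℝ} {γ : ℝ} (hN : ∀ x, 0 ≤ N x) (hγ : γ ≤ μ.real univ)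
    {η : ℝ} (hη : 0 < η) : γ ≤ μ.real {x | 0 ≤ N x / max η (a x)} := by
  have : {x | 0 ≤ N x / max η (a x)} = univ :=
    eq_univ_of_forall fun x => div_nonneg (hN x) (hη.le.trans (le_max_left _ _))
  rwa [this]

section AntitoneSup

variable {Q ρ : ℝ → ℝ} {r a₀ : ℝ}

lemma csSup_image_Ioi_le_of_forall_exists (hQ : ∀ η η', 0 < η → η ≤ η' → Q η' ≤ Q η)
    (ha₀ : 0 < a₀) (hρ : ∀ η, 0 < η → η < a₀ → ρ η = r)
    (h : ∀ η₀ > 0, ∃ η, 0 < η ∧ η < η₀ ∧ Q η ≤ ρ η) : sSup (Q '' Ioi 0) ≤ r := by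
  refine csSup_le (nonempty_Ioi.image Q) ?_
  rintro _ ⟨η', hη' : 0 < η', rfl⟩
  obtain ⟨η, hη, hηlt, hle⟩ := h (min η' a₀) (lt_min hη' ha₀)
  calc Q η' ≤ Q η := hQ η η' hη (hηlt.trans_le (min_le_left _ _)).le
    _ ≤ r := hρ η hη (hηlt.trans_le (min_le_right _ _)) ▸ hle

lemma exists_forall_le_iff_csSup_image_Ioi_le (hQ : ∀ η η', 0 < η → η ≤ η' → Q η' ≤ Q η)
    (hbdd : BddAbove (Q '' Ioi 0)) (ha₀ : 0 < a₀) (hρ : ∀ η, 0 < η → η < a₀ → ρ η = r) :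
    (∃ η₀ > 0, ∀ η, 0 < η → η < η₀ → Q η ≤ ρ η) ↔ sSup (Q '' Ioi 0) ≤ r := by
  refine ⟨fun ⟨η₁, hη₁, h⟩ => csSup_image_Ioi_le_of_forall_exists hQ ha₀ hρ fun η₀ hη₀ =>
    ⟨min η₀ η₁ / 2, by positivity, by linarith [min_le_left η₀ η₁, lt_min hη₀ hη₁],
      h _ (by positivity) (by linarith [min_le_right η₀ η₁, lt_min hη₀ hη₁])⟩, fun ht => ?_⟩
  exact ⟨a₀, ha₀, fun η hη hηa => (hρ η hη hηa).symm ▸ (le_csSup hbdd ⟨η, hη, rfl⟩).trans ht⟩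

lemma forall_exists_le_iff_csSup_image_Ioi_le (hQ : ∀ η η', 0 < η → η ≤ η' → Q η' ≤ Q η)
    (hbdd : BddAbove (Q '' Ioi 0)) (ha₀ : 0 < a₀) (hρ : ∀ η, 0 < η → η < a₀ → ρ η = r) :
    (∀ η₀ > 0, ∃ η, 0 < η ∧ η < η₀ ∧ Q η ≤ ρ η) ↔ sSup (Q '' Ioi 0) ≤ r := by
  refine ⟨csSup_image_Ioi_le_of_forall_exists hQ ha₀ hρ, fun ht η₀ hη₀ => ?_⟩
  obtain ⟨η₁, hη₁, h⟩ := (exists_forall_le_iff_csSup_image_Ioi_le hQ hbdd ha₀ hρ).2 ht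
  exact ⟨min η₀ η₁ / 2, by positivity, by linarith [min_le_left η₀ η₁, lt_min hη₀ hη₁],
    h _ (by positivity) (by linarith [min_le_right η₀ η₁, lt_min hη₀ hη₁])⟩

end AntitoneSup

-- With `N = Π_post(B_λ(·))` and `a = Π(B_λ(·))`, `N / max η a` is the truncated ratio `R_{η,λ}`,
-- `N / a` is the cell ratio `f_λ`, and `Q η` is the threshold `l_{η,λ,γ}`.
section TruncatedRatio

variable {α : Type*} [MeasurableSpace α] {μ : Measure α} [IsFiniteMeasure μ]
  {N a : α → ℝ} {Q : ℝ → ℝ} {γ : ℝ}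

lemma measureReal_setOf_le_div_max_le (hN : ∀ x, 0 ≤ N x) (ha : ∀ᵐ x ∂μ, 0 < a x) (η c : ℝ) :
    μ.real {x | c ≤ N x / max η (a x)} ≤ μ.real {x | c ≤ N x / a x} :=
  measureReal_setOf_le_le_of_ae_le (ha.mono fun _ hx => div_max_le_div hN hx η) c

lemma quantile_div_max_le (hN : ∀ x, 0 ≤ N x) (ha : ∀ᵐ x ∂μ, 0 < a x)
    (hQ : ∀ η, Q η = sSup {c | γ ≤ μ.real {x | c ≤ N x / max η (a x)}})
    (hγ : γ ≤ μ.real univ) {b : ℝ} (hb : μ.real {x | b ≤ N x / a x} < γ) {η : ℝ} (hη : 0 < η) :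
    Q η ≤ b := by
  rw [hQ]
  refine csSup_le ⟨0, le_measureReal_setOf_nonneg_le_div_max hN hγ hη⟩ fun c (hc : γ ≤ _) =>
    not_lt.1 fun hbc => ?_
  linarith [measureReal_setOf_le_anti (μ := μ) (fun x => N x / max η (a x)) hbc.le,
    measureReal_setOf_le_div_max_le hN ha η b]

lemma quantile_div_max_anti (hN : ∀ x, 0 ≤ N x) (ha : ∀ᵐ x ∂μ, 0 < a x)
    (hQ : ∀ η, Q η = sSup {c | γ ≤ μ.real {x | c ≤ N x / max η (a x)}})
    (hγ : γ ≤ μ.real univ) {b : ℝ} (hb : μ.real {x | b ≤ N x / a x} < γ) {η η' : ℝ}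
    (hη : 0 < η) (hηη' : η ≤ η') : Q η' ≤ Q η := by
  rw [hQ, hQ]
  refine csSup_le_csSup (bddAbove_setOf_le_measureReal_setOf_le
      ((measureReal_setOf_le_div_max_le hN ha η b).trans_lt hb))
    ⟨0, le_measureReal_setOf_nonneg_le_div_max hN hγ (hη.trans_le hηη')⟩
    fun c (hc : γ ≤ _) => hc.trans (measureReal_mono fun x (hx : c ≤ _) =>
      hx.trans (div_max_anti hN hη hηη' x))

lemma le_measureReal_of_lt_csSup_quantile (hN : ∀ x, 0 ≤ N x) (ha : ∀ᵐ x ∂μ, 0 < a x)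
    (hQ : ∀ η, Q η = sSup {c | γ ≤ μ.real {x | c ≤ N x / max η (a x)}})
    (hγ : γ ≤ μ.real univ) {c : ℝ} (hc : c < sSup (Q '' Ioi 0)) :
    γ ≤ μ.real {x | c ≤ N x / a x} := by
  obtain ⟨_, ⟨η, hη, rfl⟩, hcη⟩ := exists_lt_of_lt_csSup (nonempty_Ioi.image Q) hc
  rw [hQ] at hcη
  obtain ⟨c', hc' : γ ≤ _, hcc'⟩ :=
    exists_lt_of_lt_csSup ⟨0, le_measureReal_setOf_nonneg_le_div_max hN hγ hη⟩ hcη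
  exact hc'.trans ((measureReal_setOf_le_anti _ hcc'.le).trans
    (measureReal_setOf_le_div_max_le hN ha η c))

lemma le_csSup_quantile_of_lt_measureReal (hN : ∀ x, 0 ≤ N x) (ha : ∀ᵐ x ∂μ, 0 < a x)
    (hQ : ∀ η, Q η = sSup {c | γ ≤ μ.real {x | c ≤ N x / max η (a x)}})
    (hγ : γ ≤ μ.real univ) {b : ℝ} (hb : μ.real {x | b ≤ N x / a x} < γ) {c : ℝ}
    (hc : γ < μ.real {x | c ≤ N x / a x}) : c ≤ sSup (Q '' Ioi 0) := by
  set s : ℕ → Set α := fun n => {x | c ≤ N x / max (1 / ((n : ℝ) + 1)) (a x)}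
  have hs : Monotone s := fun n m hnm x (hx : c ≤ _) =>
    hx.trans (div_max_anti hN Nat.one_div_pos_of_nat (Nat.one_div_le_one_div hnm) x)
  have hsub : μ.real {x | c ≤ N x / a x} ≤ μ.real (⋃ n, s n) := by
    refine ENNReal.toReal_mono (measure_ne_top _ _) (measure_mono_ae (ha.mono fun x hx hcx => ?_))
    obtain ⟨n, hn⟩ := exists_nat_one_div_lt hx
    exact mem_iUnion.2 ⟨n, show c ≤ _ by rwa [max_eq_right hn.le]⟩
  obtain ⟨n, hn⟩ := (((ENNReal.tendsto_toReal (measure_ne_top _ _)).comp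
    (tendsto_measure_iUnion_atTop hs)).eventually (lt_mem_nhds (hc.trans_le hsub))).exists
  have hQn : c ≤ Q (1 / (n + 1)) := by
    rw [hQ]
    exact le_csSup (bddAbove_setOf_le_measureReal_setOf_le
      ((measureReal_setOf_le_div_max_le hN ha _ b).trans_lt hb)) hn.le
  exact hQn.trans (le_csSup ⟨b, by
    rintro _ ⟨η, hη, rfl⟩
    exact quantile_div_max_le hN ha hQ hγ hb hη⟩ ⟨_, mem_Ioi.2 Nat.one_div_pos_of_nat, rfl⟩)

lemma quantile_div_max_spec (hN : ∀ x, 0 ≤ N x) (ha : ∀ᵐ x ∂μ, 0 < a x)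
    (hQ : ∀ η, Q η = sSup {c | γ ≤ μ.real {x | c ≤ N x / max η (a x)}})
    (hγ₀ : 0 < γ) (hγ : γ ≤ μ.real univ) (hf : AEMeasurable (fun x => N x / a x) μ) :
    (∀ c < sSup (Q '' Ioi 0), γ ≤ μ.real {x | c ≤ N x / a x}) ∧
    (∀ c, γ < μ.real {x | c ≤ N x / a x} → c ≤ sSup (Q '' Ioi 0)) ∧
    ∀ x, 0 < a x →
      ((∃ η₀ > 0, ∀ η, 0 < η → η < η₀ → Q η ≤ N x / max η (a x)) ↔
        sSup (Q '' Ioi 0) ≤ N x / a x) ∧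
      ((∀ η₀ > 0, ∃ η, 0 < η ∧ η < η₀ ∧ Q η ≤ N x / max η (a x)) ↔
        sSup (Q '' Ioi 0) ≤ N x / a x) := by
  obtain ⟨b, hb⟩ := exists_measureReal_setOf_le_lt hf hγ₀
  have hanti : ∀ η η', 0 < η → η ≤ η' → Q η' ≤ Q η := fun _ _ hη hηη' =>
    quantile_div_max_anti hN ha hQ hγ hb hη hηη'
  have hbdd : BddAbove (Q '' Ioi 0) := ⟨b, by
    rintro _ ⟨η, hη, rfl⟩
    exact quantile_div_max_le hN ha hQ hγ hb hη⟩
  refine ⟨fun c hc => le_measureReal_of_lt_csSup_quantile hN ha hQ hγ hc,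
    fun c hc => le_csSup_quantile_of_lt_measureReal hN ha hQ hγ hb hc, fun x hx => ?_⟩
  have hρ : ∀ η, 0 < η → η < a x → N x / max η (a x) = N x / a x := fun η _ hη => by
    rw [max_eq_right hη.le]
  exact ⟨exists_forall_le_iff_csSup_image_Ioi_le hanti hbdd hx hρ,
    forall_exists_le_iff_csSup_image_Ioi_le hanti hbdd hx hρ⟩

end TruncatedRatio

lemma IsRegularDiscretization.aemeasurable_comp_cell {E β : Type*} [MeasurableSpace E]
    [PseudoMetricSpace E] [MeasurableSpace β] {Ψ : Set E} {Pri μ : Measure E}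
    {B : ℝ → E → Set E} (hB : IsRegularDiscretization Ψ Pri B) {l : ℝ} (hl : 0 < l)
    (hμ : ∀ᵐ x ∂μ, x ∈ Ψ) (φ : Set E → β) : AEMeasurable (fun x => φ (B l x)) μ := by
  have hcover : Ψ ⊆ ⋃ S ∈ B l '' Ψ, S := fun ψ hψ =>
    mem_biUnion (mem_image_of_mem _ hψ) (hB.mem_cell hl ψ hψ)
  rw [← Measure.restrict_eq_self_of_ae_mem hμ]
  refine AEMeasurable.mono_set hcover ?_
  have := (hB.countable_cells hl).to_subtype
  rw [biUnion_eq_iUnion, aemeasurable_iUnion_iff]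
  rintro ⟨_, ψ, hψ, rfl⟩
  refine (aemeasurable_const (b := φ (B l ψ))).congr
    (ae_restrict_of_forall_mem (hB.measurable_cell hl ψ hψ) fun x hx => ?_)
  simp only [hB.partition hl ψ hψ x (hB.cell_subset hl ψ hψ hx) hx]

theorem stmt_17_general {k : ℕ} (Ψ : Set (EuclideanSpace ℝ (Fin k))) (hΨopen : IsOpen Ψ)
    (p q : EuclideanSpace ℝ (Fin k) → ℝ)
    (hpc : Continuous p) (hppos : ∀ x, 0 < p x)
    (hqm : Measurable q) (hqnn : ∀ x, 0 ≤ q x)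
    (Pri Post : Measure (EuclideanSpace ℝ (Fin k)))
    [IsProbabilityMeasure Pri] [IsProbabilityMeasure Post]
    (hPost : Post = (volume.restrict Ψ).withDensity fun x => ENNReal.ofReal (q x))
    (B : ℝ → EuclideanSpace ℝ (Fin k) → Set (EuclideanSpace ℝ (Fin k)))
    (hB : IsRegularDiscretization Ψ Pri B)
    (hconv : ∀ ψ ∈ Ψ,
      Tendsto (fun l => (Post (B l ψ)).toReal / (Pri (B l ψ)).toReal)
        (𝓝[>] 0) (𝓝 (q ψ / p ψ)))
    (hcontdist : ∀ c : ℝ, 0 ≤ c → Post {ψ ∈ Ψ | q ψ / p ψ = c} = 0)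
    (γ : ℝ) (hγ : 0 < γ) (hγ1 : γ < 1)
    (cγ : ℝ)
    (hcγ : cγ = sSup {c : ℝ | 0 ≤ c ∧ γ ≤ (Post {ψ ∈ Ψ | c ≤ q ψ / p ψ}).toReal})
    (Cγ : Set (EuclideanSpace ℝ (Fin k))) (hCγ : Cγ = {ψ ∈ Ψ | cγ ≤ q ψ / p ψ})
    (R : ℝ → ℝ → EuclideanSpace ℝ (Fin k) → ℝ)
    (hR : ∀ η l ψ, R η l ψ = (Post (B l ψ)).toReal / max η (Pri (B l ψ)).toReal)
    (lpl : ℝ → ℝ → ℝ)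
    (hlpl : ∀ η l, lpl η l = sSup {c : ℝ | γ ≤ (Post {ψ ∈ Ψ | c ≤ R η l ψ}).toReal})
    (L : ℝ → ℝ → Set (EuclideanSpace ℝ (Fin k)))
    (hLdef : ∀ η l, L η l = {ψ ∈ Ψ | lpl η l ≤ R η l ψ})
    (Linf Lsup : ℝ → Set (EuclideanSpace ℝ (Fin k)))
    (hLinf : ∀ l, Linf l = {ψ | ∃ η₀ > 0, ∀ η, 0 < η → η < η₀ → ψ ∈ L η l})
    (hLsup : ∀ l, Lsup l = {ψ | ∀ η₀ > 0, ∃ η, 0 < η ∧ η < η₀ ∧ ψ ∈ L η l}) :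
    Tendsto (fun l => Post (Linf l ∆ Cγ)) (𝓝[>] 0) (𝓝 0) ∧
    Tendsto (fun l => Post (Lsup l ∆ Cγ)) (𝓝[>] 0) (𝓝 0) := by
  have hΨ : ∀ᵐ ψ ∂Post, ψ ∈ Ψ :=
    hPost ▸ (withDensity_absolutelyContinuous _ _).ae_le (ae_restrict_mem hΨopen.measurableSet)
  have hsep : ∀ P : EuclideanSpace ℝ (Fin k) → Prop, Post {ψ ∈ Ψ | P ψ} = Post {ψ | P ψ} :=
    fun P => measure_congr (hΨ.mono fun ψ hψ => propext (and_iff_right hψ))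
  set g := fun ψ => q ψ / p ψ
  have hg : Measurable g := hqm.div hpc.measurable
  have hg0 : ∀ ψ, 0 ≤ g ψ := fun ψ => div_nonneg (hqnn ψ) (hppos ψ).le
  have hatom : ∀ b, Post (g ⁻¹' {b}) = 0 := fun b => (lt_or_ge b 0).elim
    (fun hb => measure_mono_null (fun ψ (h : g ψ = b) => ((h ▸ hg0 ψ).not_gt hb).elim)
      measure_empty)
    (fun hb => (hsep _).symm.trans (hcontdist b hb))
  have hcγ' : cγ = sSup {c | 0 ≤ c ∧ γ ≤ Post.real {x | c ≤ g x}} := by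
    simp only [hcγ, hsep]; rfl
  obtain ⟨hcγ_eq, hcγ_gt⟩ := measureReal_setOf_csSup_le_eq hg hatom hγ
    (by simp [hg0, hγ1.le])
  rw [← hcγ'] at hcγ_eq hcγ_gt
  set f := fun l ψ => Post.real (B l ψ) / Pri.real (B l ψ)
  set t := fun l => sSup ((lpl · l) '' Ioi 0)
  have hf : ∀ l > 0, AEMeasurable (f l) Post := fun l hl =>
    hB.aemeasurable_comp_cell hl hΨ fun S => Post.real S / Pri.real S
  have hfg : TendstoInMeasure Post f (𝓝[>] 0) g :=
    tendstoInMeasure_of_tendsto_ae_of_isCountablyGenerated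
      (eventually_mem_nhdsWithin.mono fun l hl => (hf l hl).aestronglyMeasurable) (hΨ.mono hconv)
  have hl : ∀ l > 0, (∀ c < t l, γ ≤ Post.real {x | c ≤ f l x}) ∧
      (∀ c, γ < Post.real {x | c ≤ f l x} → c ≤ t l) ∧
      Post (Linf l ∆ Cγ) = Post ({x | t l ≤ f l x} ∆ {x | cγ ≤ g x}) ∧
      Post (Lsup l ∆ Cγ) = Post ({x | t l ≤ f l x} ∆ {x | cγ ≤ g x}) := fun l hl => by
    have hpos : ∀ ψ ∈ Ψ, 0 < Pri.real (B l ψ) := fun ψ hψ =>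
      ENNReal.toReal_pos (hB.pos_prior hl ψ hψ).ne' (measure_ne_top _ _)
    obtain ⟨h_lt, h_gt, h_mem⟩ := quantile_div_max_spec (μ := Post) (Q := (lpl · l))
      (fun ψ => measureReal_nonneg) (hΨ.mono hpos) (fun η => by simp only [hlpl, hR, hsep]; rfl)
      hγ (by simp [hγ1.le]) (hf l hl)
    refine ⟨h_lt, h_gt, measure_congr (eventuallyEq_set.2 (hΨ.mono fun ψ hψ => ?_)),
      measure_congr (eventuallyEq_set.2 (hΨ.mono fun ψ hψ => ?_))⟩ <;>
    simp only [mem_symmDiff, hLinf, hLsup, hLdef, hR, hCγ, mem_ofPred_eq, ← measureReal_def, hψ,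
      true_and, (h_mem ψ (hpos ψ hψ)).1, (h_mem ψ (hpos ψ hψ)).2] <;> rfl
  have hmain := tendsto_measure_setOf_le_symmDiff_of_tendstoInMeasure hfg hg hatom
    (by simpa using hγ1) hcγ_eq hcγ_gt
    (eventually_mem_nhdsWithin.mono fun l hl' => (hl l hl').1)
    (eventually_mem_nhdsWithin.mono fun l hl' => (hl l hl').2.1)
  exact ⟨hmain.congr' (eventually_mem_nhdsWithin.mono fun l hl' => (hl l hl').2.2.1.symm),
    hmain.congr' (eventually_mem_nhdsWithin.mono fun l hl' => (hl l hl').2.2.2.symm)⟩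

/-- **Theorem 11.** Under a regular discretization of `Ψ`, with the
discretized relative belief ratios converging pointwise to `q/p` and the relative
belief ratio having a continuous posterior distribution, the `liminf` and `limsup`
(as `η → 0`) of the undiscretized `γ`-lowest posterior loss regions `L_{η,λ,γ}`
converge, as `λ → 0`, to the `γ`-relative surprise region `C_γ` in posterior measure
of the symmetric difference. -/
theorem stmt_17 {k : ℕ} (Ψ : Set (EuclideanSpace ℝ (Fin k))) (hΨopen : IsOpen Ψ)
    (p q : EuclideanSpace ℝ (Fin k) → ℝ)
    (hpc : Continuous p) (hppos : ∀ x, 0 < p x)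
    (hqm : Measurable q) (hqnn : ∀ x, 0 ≤ q x)
    (Pri Post : Measure (EuclideanSpace ℝ (Fin k)))
    [IsProbabilityMeasure Pri] [IsProbabilityMeasure Post]
    (hPri : Pri = (volume.restrict Ψ).withDensity fun x => ENNReal.ofReal (p x))
    (hPost : Post = (volume.restrict Ψ).withDensity fun x => ENNReal.ofReal (q x))
    (B : ℝ → EuclideanSpace ℝ (Fin k) → Set (EuclideanSpace ℝ (Fin k)))
    (hB : IsRegularDiscretization Ψ Pri B)
    (hconv : ∀ ψ ∈ Ψ,
      Tendsto (fun l => (Post (B l ψ)).toReal / (Pri (B l ψ)).toReal)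
        (𝓝[>] 0) (𝓝 (q ψ / p ψ)))
    (hcontdist : ∀ c : ℝ, 0 ≤ c → Post {ψ ∈ Ψ | q ψ / p ψ = c} = 0)
    (γ : ℝ) (hγ : 0 < γ) (hγ1 : γ < 1)
    (cγ : ℝ)
    (hcγ : cγ = sSup {c : ℝ | 0 ≤ c ∧ γ ≤ (Post {ψ ∈ Ψ | c ≤ q ψ / p ψ}).toReal})
    (Cγ : Set (EuclideanSpace ℝ (Fin k))) (hCγ : Cγ = {ψ ∈ Ψ | cγ ≤ q ψ / p ψ})
    (R : ℝ → ℝ → EuclideanSpace ℝ (Fin k) → ℝ)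
    (hR : ∀ η l ψ, R η l ψ = (Post (B l ψ)).toReal / max η (Pri (B l ψ)).toReal)
    (lpl : ℝ → ℝ → ℝ)
    (hlpl : ∀ η l, lpl η l = sSup {c : ℝ | γ ≤ (Post {ψ ∈ Ψ | c ≤ R η l ψ}).toReal})
    (L : ℝ → ℝ → Set (EuclideanSpace ℝ (Fin k)))
    (hLdef : ∀ η l, L η l = {ψ ∈ Ψ | lpl η l ≤ R η l ψ})
    (Linf Lsup : ℝ → Set (EuclideanSpace ℝ (Fin k)))
    (hLinf : ∀ l, Linf l = {ψ | ∃ η₀ > 0, ∀ η, 0 < η → η < η₀ → ψ ∈ L η l})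
    (hLsup : ∀ l, Lsup l = {ψ | ∀ η₀ > 0, ∃ η, 0 < η ∧ η < η₀ ∧ ψ ∈ L η l}) :
    Tendsto (fun l => Post (Linf l ∆ Cγ)) (𝓝[>] 0) (𝓝 0) ∧
    Tendsto (fun l => Post (Lsup l ∆ Cγ)) (𝓝[>] 0) (𝓝 0) :=
  stmt_17_general Ψ hΨopen p q hpc hppos hqm hqnn Pri Post hPost B hB hconv hcontdist γ hγ hγ1 cγ
    hcγ Cγ hCγ R hR lpl hlpl L hLdef Linf Lsup hLinf hLsup
end
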